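/- arXiv:2601.04409 — 2 statements merged into one kernel-verified Lean document; each statement's English description precedes it below -/
import Mathlib

section
/- For a tuple (b_1,…,b_L) of subsets of {1,…,n} and 1 ≤ i < L, define e_i^{↓*}(b_1,…,b_L) to be the tuple obtained by replacing the pair (b_i, b_{i+1}) with (b_i ∪ u, m), where m and u are respectively the sets of matched and unmatched elements of b_{i+1} in the bracket word θ_1(cw((b_i, b_{i+1}))). Then for any subsets a, b, c ⊆ {1,…,n}, θ(a⊗b⊗c) = θ(e_1^{↓*}(a,b,c)); and more generally, for any subsets b_1,…,b_L ⊆ {1,…,n} and any 1 ≤ i < L, θ(b_1⊗⋯⊗b_L) = θ(e_i^{↓*}(b_1,…,b_L)). -/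
open scoped BigOperators

namespace MultilineQueue

/-! ### Basic combinatorial utilities -/

/-- The list of columns `1, …, n`. -/
def colsList (n : ℕ) : List ℕ := (List.range n).map (· + 1)

/-- Insert `x` into a weakly decreasing list, keeping it weakly decreasing. -/
def insDesc (x : ℕ) : List ℕ → List ℕ
  | [] => [x]
  | y :: ys => if y ≤ x then x :: y :: ys else y :: insDesc x ys

/-- Sort a list of naturals in weakly decreasing order. -/
def sortDesc : List ℕ → List ℕ
  | [] => []
  | x :: xs => insDesc x (sortDesc xs)

/-- The positive parts of a weak composition `α` (supported on columns `1,…,n`). -/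
def compParts (n : ℕ) (α : ℕ → ℕ) : List ℕ :=
  ((colsList n).map α).filter (fun x => 0 < x)

/-- `sort(α)`: the partition obtained by sorting the positive parts of `α` decreasingly. -/
def sortComp (n : ℕ) (α : ℕ → ℕ) : List ℕ := sortDesc (compParts n α)

/-- The conjugate partition: `(conj l).get j = #{i : l i ≥ j+1}`, for `j = 0,…,l₁-1`. -/
def conj (l : List ℕ) : List ℕ :=
  (List.range (l.headD 0)).map (fun j => (l.filter (fun x => j < x)).length)

/-- A list is a partition: weakly decreasing with positive parts. -/
def IsPartitionL (l : List ℕ) : Prop := l.Pairwise (· ≥ ·) ∧ ∀ x ∈ l, 0 < x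

/-- Dominance order on partitions: `mu ⊴ lam` (same size, partial sums dominated). -/
def Dominates (lam mu : List ℕ) : Prop :=
  mu.sum = lam.sum ∧ ∀ k, (mu.take k).sum ≤ (lam.take k).sum

/-- A weak composition with `n` parts: a function `ℕ → ℕ` supported on `{1,…,n}`. -/
def IsWeakComp (n : ℕ) (α : ℕ → ℕ) : Prop := ∀ j, (j = 0 ∨ n < j) → α j = 0

/-- The simple transposition `s_i` acting on a weak composition, exchanging
the entries at positions `i` and `i+1`. -/
def swapComp (i : ℕ) (α : ℕ → ℕ) : ℕ → ℕ :=
  fun j => if j = i then α (i + 1) else if j = i + 1 then α i else α j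

/-- A strong composition `τ` (a list), regarded as a weak composition with `n`
parts by appending zeros. -/
def padComp (n : ℕ) (τ : List ℕ) : ℕ → ℕ :=
  fun j => if 1 ≤ j ∧ j ≤ n then τ.getD (j - 1) 0 else 0

/-! ### Bracket matching between two rows -/

/-- Classical bracket matching between a bottom row `a` (closing letters) and a top
row `b` (opening letters), reading columns `1,…,n` left to right, and within each
column the top letter before the bottom letter.  Returns the tuple
`(stack of unmatched opening positions (head = most recent),
  matched positions of `b`, matched positions of `a`,
  unmatched positions of `a` in left-to-right order)`. -/
def scan (n : ℕ) (a b : Finset ℕ) : List ℕ × Finset ℕ × Finset ℕ × List ℕ :=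
  (colsList n).foldl
    (fun st j =>
      let stk : List ℕ := if j ∈ b then j :: st.1 else st.1
      if j ∈ a then
        match stk with
        | [] => ([], st.2.1, st.2.2.1, st.2.2.2 ++ [j])
        | x :: rest => (rest, insert x st.2.1, insert j st.2.2.1, st.2.2.2)
      else (stk, st.2.1, st.2.2.1, st.2.2.2))
    ([], ∅, ∅, [])

/-- `θ(a⊗b)`: the set of elements of the bottom row `a` classically matched when the
top row `b` is bracketed against it. -/
def theta (n : ℕ) (a b : Finset ℕ) : Finset ℕ := (scan n a b).2.2.1

/-- The set of elements of the top row `b` that are classically matched. -/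
def matchedTop (n : ℕ) (a b : Finset ℕ) : Finset ℕ := (scan n a b).2.1

/-- `R(a,b)`: cylindrical bracket matching; the unmatched opening parentheses wrap
around and match the leftmost unmatched closing parentheses. -/
def Rcyl (n : ℕ) (a b : Finset ℕ) : Finset ℕ :=
  (scan n a b).2.2.1 ∪ ((scan n a b).2.2.2.take (scan n a b).1.length).toFinset

/-- `θ(b₁⊗…⊗b_L)`, extended recursively:
`θ(b₁⊗…⊗b_L) = θ(b₁ ⊗ θ(b₂⊗…⊗b_L))`. -/
def thetaTup (n : ℕ) : List (Finset ℕ) → Finset ℕ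
  | [] => ∅
  | [b] => b
  | b :: c :: rest => theta n b (thetaTup n (c :: rest))

/-- `R(b₁,…,b_L)`, extended recursively: `R(b₁,…,b_L) = R(b₁, R(b₂,…,b_L))`. -/
def Rtup (n : ℕ) : List (Finset ℕ) → Finset ℕ
  | [] => ∅
  | [b] => b
  | b :: c :: rest => Rcyl n b (Rtup n (c :: rest))

/-! ### Multiline queues, the FM labelling, type and major index

A multiline queue (or generalized multiline queue) is recorded as a list of
rows, bottom row first; each row is the set of columns containing a ball. -/

/-- The FM label of the ball of the bottom row of `rows` in column `c`
(`0` if there is no ball there): by the corner transfer matrix description of the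
Ferrari–Martin algorithm, the bottom-row balls of label `≥ k` are exactly
`R(B₁,…,B_k)`, so the label is the largest such `k`. -/
def botLabel (n : ℕ) (rows : List (Finset ℕ)) (c : ℕ) : ℕ :=
  (Finset.range (rows.length + 1)).sup
    (fun k => if c ∈ Rtup n (rows.take k) then k else 0)

/-- `type(M)`: the weak composition of FM labels on the bottom row. -/
def typeOf (n : ℕ) (rows : List (Finset ℕ)) : ℕ → ℕ := botLabel n rows

/-- `L_M(r,c)`: the FM label of the ball at row `r` (1-indexed from the bottom),
column `c`; `0` if the site is empty. The labels of row `r` only depend on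
rows `r, r+1, …`, for which `c` sits on the bottom row; a strand of length `h`
through row `r` truncates to a strand of length `h − (r−1)` there. -/
def labelAt (n : ℕ) (rows : List (Finset ℕ)) (r c : ℕ) : ℕ :=
  if 1 ≤ r ∧ 0 < botLabel n (rows.drop (r - 1)) c then
    botLabel n (rows.drop (r - 1)) c + (r - 1)
  else 0

/-- `strtype(M)`: the strong type, i.e. the type with its zero entries deleted. -/
def strtypeOf (n : ℕ) (rows : List (Finset ℕ)) : List ℕ :=
  ((colsList n).map (typeOf n rows)).filter (fun x => x ≠ 0)

/-- `I_k(M)`: the set of columns whose bottom-row label is exactly `k`. -/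
def Iset (n : ℕ) (rows : List (Finset ℕ)) (k : ℕ) : Finset ℕ :=
  (Finset.Icc 1 n).filter (fun c => typeOf n rows c = k)

/-- The set of balls of row `r` (1-indexed) of `M` having label `≥ ℓ`. -/
def Sset (n : ℕ) (rows : List (Finset ℕ)) (r ℓ : ℕ) : Finset ℕ :=
  if ℓ ≤ rows.length then Rtup n ((rows.drop (r - 1)).take (ℓ + 1 - r)) else ∅

/-- The number of balls of row `r` with label `≥ ℓ` whose FM pairing into row
`r−1` wraps around the cylinder: these are precisely the ones that cannot be
matched classically. -/
def wrapCount (n : ℕ) (rows : List (Finset ℕ)) (r ℓ : ℕ) : ℕ :=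
  (Sset n rows r ℓ).card - (theta n (rows.getD (r - 2) ∅) (Sset n rows r ℓ)).card

/-- `m_{ℓ,r}`: the number of balls labelled exactly `ℓ` in row `r` whose FM pairing
into row `r−1` wraps. -/
def mWrap (n : ℕ) (rows : List (Finset ℕ)) (ℓ r : ℕ) : ℕ :=
  wrapCount n rows r ℓ - wrapCount n rows r (ℓ + 1)

/-- The major index `maj(M) = Σ_{2≤ℓ≤L} Σ_{2≤r≤ℓ} m_{ℓ,r}·(ℓ−r+1)`. -/
def maj (n : ℕ) (rows : List (Finset ℕ)) : ℕ :=
  ∑ ℓ ∈ Finset.Icc 2 rows.length, ∑ r ∈ Finset.Icc 2 ℓ, mWrap n rows ℓ r * (ℓ - r + 1)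

/-- `M` is a multiline queue of shape `(lam, n)`: it has `lam₁` rows, all contained
in `{1,…,n}`, and row `j` has `lam'_j` balls. -/
def IsMLQ (n : ℕ) (lam : List ℕ) (rows : List (Finset ℕ)) : Prop :=
  rows.length = lam.headD 0 ∧ (∀ B ∈ rows, B ⊆ Finset.Icc 1 n) ∧
    ∀ j, j < rows.length → (rows.getD j ∅).card = (lam.filter (fun x => j < x)).length

/-- The unique straight (nonwrapping, vertical-strand) multiline queue of type `α`:
its `j`-th row is `{c : α c ≥ j}`. -/
def straight (n : ℕ) (α : ℕ → ℕ) : List (Finset ℕ) :=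
  (List.range ((sortComp n α).headD 0)).map
    (fun j => (Finset.Icc 1 n).filter (fun c => j + 1 ≤ α c))

/-! ### Row dropping operators and the collapsing map -/

/-- The saturated row dropping operator `e_i^{↓*}` (for `1 ≤ i < rows.length`):
the pair of rows `(B_i, B_{i+1})` is replaced by `(B_i ∪ u, m)`, where `m` and `u`
are the matched, resp. unmatched, elements of `B_{i+1}` against `B_i`. -/
def eStar (n : ℕ) (i : ℕ) (rows : List (Finset ℕ)) : List (Finset ℕ) :=
  if 1 ≤ i ∧ i < rows.length then
    let a := rows.getD (i - 1) ∅
    let b := rows.getD i ∅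
    let m := matchedTop n a b
    (rows.set (i - 1) (a ∪ (b \ m))).set i m
  else rows

/-- `e^{↓*}_{[b,1]} = e^{↓*}_1 ∘ e^{↓*}_2 ∘ ⋯ ∘ e^{↓*}_b` (applying `e^{↓*}_b` first). -/
def eStarSeq (n b : ℕ) (rows : List (Finset ℕ)) : List (Finset ℕ) :=
  (List.range b).foldl (fun r k => eStar n (b - k) r) rows

/-- The collapsing operator
`ρ_N = e^{↓*}_{[L−1,1]} ∘ ⋯ ∘ e^{↓*}_{[2,1]} ∘ e^{↓*}_{[1,1]}`; the resulting
empty rows at the top are discarded, so that the result is an honest nonwrapping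
multiline queue of its own (smaller) shape. -/
def rhoN (n : ℕ) (rows : List (Finset ℕ)) : List (Finset ℕ) :=
  ((List.range (rows.length - 1)).foldl (fun r i => eStarSeq n (i + 1) r) rows).filter
    (fun B => B ≠ ∅)

/-- `π^{(k)}(M)`: the bottom `k` rows of `M`. -/
def trunc (rows : List (Finset ℕ)) (k : ℕ) : List (Finset ℕ) := rows.take k

/-- `ρ^{(k)}(M) = ρ_N(π^{(k)}(M))`. -/
def rhoTrunc (n : ℕ) (rows : List (Finset ℕ)) (k : ℕ) : List (Finset ℕ) :=
  rhoN n (trunc rows k)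

/-- The intermediate stages `M₁ = M, M₂ = e^{↓*}_{[1,1]}(M₁), …, M_L` of the
collapsing procedure. -/
def stages (n : ℕ) (rows : List (Finset ℕ)) : List (List (Finset ℕ)) :=
  (List.range (rows.length - 1)).scanl (fun r i => eStarSeq n (i + 1) r) rows

/-- The recording tableau `ρ_Q(M)`, as a list of rows (bottom row first):
row `j+1` receives `|row_{j+1}(M_{j+1})|` boxes with entry `j+1`, and then, at each
later stage `s+1`, `|row_{j+1}(M_{s+1})| − |row_{j+1}(M_s)|` boxes with entry `s+1`. -/
def rhoQ (n : ℕ) (rows : List (Finset ℕ)) : List (List ℕ) :=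
  let st := stages n rows
  let L := rows.length
  let size : ℕ → ℕ → ℕ := fun j s => ((st.getD s []).getD j ∅).card
  ((List.range L).map (fun j =>
    List.replicate (size j j) (j + 1) ++
      (((List.range L).filter (fun s => j < s)).map
        (fun s => List.replicate (size j s - size j (s - 1)) (s + 1))).flatten)).filter
    (fun row => row ≠ [])

/-! ### Column crystal operators -/

/-- Bracket the letters `i` (closing) against `i+1` (opening) in the row word of
`M` (rows top to bottom, right to left within each row).  Returns
`(stack of list-indices of rows with unmatched balls in column i+1 (head = most recent),
  list-indices of rows with unmatched balls in column i, in word order)`. -/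
def colScan (n : ℕ) (i : ℕ) (rows : List (Finset ℕ)) : List ℕ × List ℕ :=
  ((List.range rows.length).reverse).foldl
    (fun st r =>
      let stk : List ℕ := if i + 1 ∈ rows.getD r ∅ then r :: st.1 else st.1
      if i ∈ rows.getD r ∅ then
        match stk with
        | [] => ([], st.2 ++ [r])
        | _ :: rest => (rest, st.2)
      else (stk, st.2))
    ([], [])

/-- The column raising operator `e_i^←`: moves the ball corresponding to the
leftmost unmatched `i+1` of `θ_i(rw(M))` from column `i+1` to column `i`
(identity if there is none). -/
def eCol (n : ℕ) (i : ℕ) (rows : List (Finset ℕ)) : List (Finset ℕ) :=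
  match (colScan n i rows).1.getLast? with
  | none => rows
  | some r => rows.set r (insert i ((rows.getD r ∅).erase (i + 1)))

/-- The column lowering operator `f_i^→`: moves the ball corresponding to the
rightmost unmatched `i` of `θ_i(rw(M))` from column `i` to column `i+1`
(identity if there is none). -/
def fCol (n : ℕ) (i : ℕ) (rows : List (Finset ℕ)) : List (Finset ℕ) :=
  match (colScan n i rows).2.getLast? with
  | none => rows
  | some r => rows.set r (insert (i + 1) ((rows.getD r ∅).erase i))

/-- The 1-indexed row of the ball moved by `e_i^←`, if any. -/
def movedRowE (n : ℕ) (i : ℕ) (rows : List (Finset ℕ)) : Option ℕ :=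
  ((colScan n i rows).1.getLast?).map (· + 1)

/-- `M` is `e_i^←`-full: `type(M)_i < type(M)_{i+1}` and `θ_i(rw(M))` contains
exactly one unmatched `i+1`. -/
def isEFull (n : ℕ) (i : ℕ) (rows : List (Finset ℕ)) : Prop :=
  typeOf n rows i < typeOf n rows (i + 1) ∧ (colScan n i rows).1.length = 1

/-- `M` is `f_i^→`-full: `f_i^→(M)` is `e_i^←`-full. -/
def isFFull (n : ℕ) (i : ℕ) (rows : List (Finset ℕ)) : Prop :=
  isEFull n i (fCol n i rows)

/-- The bottom row `p` of the `i`-active region `act_i(M)`, given the row `r` of the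
moved ball and its label `ℓ`: the maximal `p ≤ r` with `L_M(p−1,i) = 0` or
`L_M(p−1,i) ≥ ℓ` (noting `L_M(0,i) = 0`, so `p = 1` always qualifies). -/
def actLow (n : ℕ) (rows : List (Finset ℕ)) (i r ℓ : ℕ) : ℕ :=
  ((Finset.Icc 1 r).filter
    (fun p => labelAt n rows (p - 1) i = 0 ∨ ℓ ≤ labelAt n rows (p - 1) i)).sup id

/-! ### FM pairings and strands -/

/-- The first element of `s` weakly to the right of `c`, cyclically. -/
def cycNext (s : Finset ℕ) (c : ℕ) : Option ℕ :=
  if h : (s.filter (fun x => c ≤ x)).Nonempty then some ((s.filter (fun x => c ≤ x)).min' h)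
  else if h2 : s.Nonempty then some (s.min' h2) else none

/-- Stable insertion into a list sorted weakly decreasingly by `key`. -/
def insKey (key : ℕ → ℕ) (x : ℕ) : List ℕ → List ℕ
  | [] => [x]
  | y :: ys => if key y ≤ key x then x :: y :: ys else y :: insKey key x ys

/-- Stable sort, weakly decreasing by `key`. -/
def sortKeyDesc (key : ℕ → ℕ) : List ℕ → List ℕ
  | [] => []
  | x :: xs => insKey key x (sortKeyDesc key xs)

/-- The FM pairings from row `r+1` to row `r` (1-indexed `r ≥ 1`): the balls of row
`r+1` are processed in decreasing order of label (left to right among equal labels),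
each pairing to the first unpaired ball of row `r` weakly to its right, cyclically.
Returns the list of pairs `(source column in row r+1, target column in row r)`. -/
def pairsAt (n : ℕ) (rows : List (Finset ℕ)) (r : ℕ) : List (ℕ × ℕ) :=
  let top := rows.getD r ∅
  let bot := rows.getD (r - 1) ∅
  let order := sortKeyDesc (fun c => labelAt n rows (r + 1) c)
    ((colsList n).filter (fun c => decide (c ∈ top)))
  (order.foldl (fun (st : Finset ℕ × List (ℕ × ℕ)) c =>
      match cycNext st.1 c with
      | some t => (st.1.erase t, st.2 ++ [(c, t)])
      | none => st) (bot, [])).2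

/-- The column of the ball of row `r` to which the ball of row `r+1` in column `c`
is paired by the FM algorithm. -/
def pairedTo (n : ℕ) (rows : List (Finset ℕ)) (r c : ℕ) : Option ℕ :=
  ((pairsAt n rows r).find? (fun p => decide (p.1 = c))).map (·.2)

/-- A strand of `M`: a nonempty sequence of columns `s = [c₁, …, c_h]` with the ball
`c_t` in row `t`, the ball `c_{t+1}` paired to `c_t` for each `t`, and the top ball
`c_h` not paired to from row `h+1`. -/
def IsStrand (n : ℕ) (rows : List (Finset ℕ)) (s : List ℕ) : Prop :=
  s ≠ [] ∧
  (∀ t, t < s.length → s.getD t 0 ∈ rows.getD t ∅) ∧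
  (∀ t, t + 1 < s.length → pairedTo n rows (t + 1) (s.getD (t + 1) 0) = some (s.getD t 0)) ∧
  (∀ c, pairedTo n rows s.length c ≠ some (s.getD (s.length - 1) 0))

/-! ### Semistandard Young tableaux and the charge statistic -/

/-- `Q` is a semistandard Young tableau of shape `sh` and content `ct`, recorded as a
list of rows (bottom row first, French convention), each row a list of entries:
rows weakly increase, columns strictly increase from bottom to top, and for every
`m ≥ 1` the entry `m` occurs `ct_{m}` times. -/
def IsSSYT (Q : List (List ℕ)) (sh ct : List ℕ) : Prop :=
  Q.map List.length = sh ∧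
  (∀ row ∈ Q, row.Pairwise (· ≤ ·)) ∧
  (∀ row ∈ Q, ∀ x ∈ row, 0 < x) ∧
  (∀ j k, j + 1 < Q.length → k < (Q.getD (j + 1) []).length →
      (Q.getD j []).getD k 0 < (Q.getD (j + 1) []).getD k 0) ∧
  (∀ m, 0 < m → ((Q.flatten).filter (fun x => x = m)).length = ct.getD (m - 1) 0)

/-- Find the rightmost occurrence of the value `v` at a position `≤ pos` in the
indexed word `l`; if none, wrap around (cyclically) and take the rightmost
occurrence of `v` overall.  Returns the position together with a flag recording
whether the search wrapped. -/
def chargeFind (l : List (ℕ × ℕ)) (v pos : ℕ) : Option (ℕ × Bool) :=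
  match (l.filter (fun p => decide (p.2 = v ∧ p.1 ≤ pos))).getLast? with
  | some p => some (p.1, false)
  | none =>
    match (l.filter (fun p => decide (p.2 = v))).getLast? with
    | some p => some (p.1, true)
    | none => none

/-- Extract (the rest of) one standard subword, consisting of the letters
`v, v+1, v+2, …`, scanning right to left cyclically from position `pos`; `idx` is
the charge index of the previously extracted letter, incremented whenever the next
letter is found to its right (i.e. when the leftward search wraps around), kept
otherwise.  Returns the total charge contribution of the extracted letters
together with the remaining word. -/
def extractCharge : ℕ → List (ℕ × ℕ) → ℕ → ℕ → ℕ → ℕ × List (ℕ × ℕ)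
  | 0, l, _, _, _ => (0, l)
  | fuel + 1, l, v, pos, idx =>
    match chargeFind l v pos with
    | none => (0, l)
    | some pw =>
      let idx' := if pw.2 then idx + 1 else idx
      let r := extractCharge fuel (l.filter (fun q => decide (q.1 ≠ pw.1))) (v + 1)
        (pw.1 - 1) idx'
      (idx' + r.1, r.2)

/-- The Lascoux–Schützenberger charge of an indexed word: repeatedly extract a
standard subword (starting from the rightmost `1`, whose index is `0`) and add up
the charge contributions. -/
def chargeWordAux : ℕ → List (ℕ × ℕ) → ℕ
  | 0, _ => 0
  | fuel + 1, l =>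
    match chargeFind l 1 l.length with
    | none => 0
    | some pw =>
      let r := extractCharge l.length (l.filter (fun q => decide (q.1 ≠ pw.1))) 2
        (pw.1 - 1) 0
      r.1 + chargeWordAux fuel r.2

/-- The charge of a word. -/
def chargeWord (w : List ℕ) : ℕ := chargeWordAux w.length (w.zipIdx.map Prod.swap)

/-- The charge of a tableau: the charge of its reading word (rows read top to
bottom, left to right within each row). -/
def tabCharge (Q : List (List ℕ)) : ℕ := chargeWord Q.reverse.flatten

/-! ### Polynomials -/

/-- The content monomial `x^M = Π_j Π_{c ∈ B_j} x_c`, with coefficients in `ℤ[q]`. -/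
noncomputable def xM (n : ℕ) (rows : List (Finset ℕ)) :
    MvPolynomial ℕ (Polynomial ℤ) :=
  (rows.map (fun B => ∏ c ∈ B, (MvPolynomial.X c : MvPolynomial ℕ (Polynomial ℤ)))).prod

/-- `q^k` as a coefficient. -/
noncomputable def qpow (k : ℕ) : Polynomial ℤ := Polynomial.X ^ k

/-- The `t = 0` ASEP polynomial `f_α(X;q,0) = Σ_{M ∈ MLQ(α)} q^{maj(M)} x^M`. -/
noncomputable def fASEP (n : ℕ) (α : ℕ → ℕ) : MvPolynomial ℕ (Polynomial ℤ) :=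
  ∑ᶠ (rows : List (Finset ℕ))
    (_ : IsMLQ n (sortComp n α) rows ∧ typeOf n rows = α),
    MvPolynomial.C (qpow (maj n rows)) * xM n rows

/-- The Demazure atom `𝒜_β(X) = Σ_{M ∈ NMLQ(β)} x^M`. -/
noncomputable def atom (n : ℕ) (β : ℕ → ℕ) : MvPolynomial ℕ (Polynomial ℤ) :=
  ∑ᶠ (rows : List (Finset ℕ))
    (_ : IsMLQ n (sortComp n β) rows ∧ maj n rows = 0 ∧ typeOf n rows = β),
    xM n rows

/-- The `t = 0` quasisymmetric Macdonald polynomial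
`G_γ(X;q,0) = Σ_{M ∈ SMLQ(γ)} q^{maj(M)} x^M`. -/
noncomputable def Gqsym (n : ℕ) (γ : List ℕ) : MvPolynomial ℕ (Polynomial ℤ) :=
  ∑ᶠ (rows : List (Finset ℕ))
    (_ : IsMLQ n (sortDesc γ) rows ∧ strtypeOf n rows = γ),
    MvPolynomial.C (qpow (maj n rows)) * xM n rows

/-- The quasisymmetric Schur polynomial `QS_τ(X) = Σ_{M ∈ SNMLQ(τ)} x^M`. -/
noncomputable def QSpoly (n : ℕ) (τ : List ℕ) : MvPolynomial ℕ (Polynomial ℤ) :=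
  ∑ᶠ (rows : List (Finset ℕ))
    (_ : IsMLQ n (sortDesc τ) rows ∧ maj n rows = 0 ∧ strtypeOf n rows = τ),
    xM n rows

/-- The nonsymmetric Kostka–Foulkes polynomial
`K_{α,β}(q) = Σ_Q q^{charge(Q)}`, the sum over the semistandard Young tableaux `Q`
of shape `sort(β)'` and content `sort(α)'` such that `type(ρ^{-1}(M_β, Q)) = α`,
the preimage being expressed via the collapsing bijection `ρ = (ρ_N, ρ_Q)`. -/
noncomputable def Kpoly (n : ℕ) (α β : ℕ → ℕ) : Polynomial ℤ :=
  ∑ᶠ (Q : List (List ℕ))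
    (_ : IsSSYT Q (conj (sortComp n β)) (conj (sortComp n α)) ∧
      ∃ rows : List (Finset ℕ), IsMLQ n (sortComp n α) rows ∧
        rhoN n rows = straight n β ∧ rhoQ n rows = Q ∧ typeOf n rows = α),
    qpow (tabCharge Q)

/-- The quasisymmetric Kostka–Foulkes polynomial
`K_{γ,τ}(q) = Σ_Q q^{charge(Q)}`, the sum over the semistandard Young tableaux `Q`
of shape `sort(τ)'` and content `sort(γ)'` such that `strtype(ρ^{-1}(M_τ, Q)) = γ`. -/
noncomputable def KpolyQ (n : ℕ) (γ τ : List ℕ) : Polynomial ℤ :=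
  ∑ᶠ (Q : List (List ℕ))
    (_ : IsSSYT Q (conj (sortDesc τ)) (conj (sortDesc γ)) ∧
      ∃ rows : List (Finset ℕ), IsMLQ n (sortDesc γ) rows ∧
        rhoN n rows = straight n (padComp n τ) ∧ rhoQ n rows = Q ∧
        strtypeOf n rows = γ),
    qpow (tabCharge Q)


/-! ### window counts -/

/-- `wc s i j = |s ∩ (i, j]|`. -/
def wc (s : Finset ℕ) (i j : ℕ) : ℕ := (s.filter (fun y => i < y ∧ y ≤ j)).card

lemma wc_zero (s : Finset ℕ) {i j : ℕ} (h : j ≤ i) : wc s i j = 0 := by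
  unfold wc
  rw [Finset.card_eq_zero, Finset.filter_eq_empty_iff]
  intro x _
  omega

lemma wc_mono (s : Finset ℕ) (i : ℕ) {j j' : ℕ} (h : j ≤ j') : wc s i j ≤ wc s i j' := by
  apply Finset.card_le_card
  intro x hx
  simp only [Finset.mem_filter] at hx ⊢
  exact ⟨hx.1, hx.2.1, hx.2.2.trans h⟩

lemma wc_subset {s t : Finset ℕ} (h : ∀ x ∈ s, x ∈ t) (i j : ℕ) : wc s i j ≤ wc t i j := by
  apply Finset.card_le_card
  intro x hx
  simp only [Finset.mem_filter] at hx ⊢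
  exact ⟨h x hx.1, hx.2⟩

lemma wc_split (s : Finset ℕ) {i k j : ℕ} (h1 : i ≤ k) (h2 : k ≤ j) :
    wc s i j = wc s i k + wc s k j := by
  unfold wc
  rw [← Finset.card_union_of_disjoint]
  · congr 1
    ext x
    simp only [Finset.mem_union, Finset.mem_filter]
    constructor
    · rintro ⟨hx, h3, h4⟩
      by_cases hk : x ≤ k
      · exact Or.inl ⟨hx, h3, hk⟩
      · exact Or.inr ⟨hx, by omega, h4⟩
    · rintro (⟨hx, h3, h4⟩ | ⟨hx, h3, h4⟩) <;> exact ⟨hx, by omega, by omega⟩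
  · rw [Finset.disjoint_left]
    intro x hx hx'
    simp only [Finset.mem_filter] at hx hx'
    omega

lemma wc_single (s : Finset ℕ) (j : ℕ) :
    wc s j (j + 1) = if j + 1 ∈ s then 1 else 0 := by
  unfold wc
  have h : s.filter (fun y => j < y ∧ y ≤ j + 1) = s.filter (fun y => y = j + 1) := by
    apply Finset.filter_congr
    intro x _
    constructor <;> intro h <;> omega
  rw [h, Finset.filter_eq']
  split <;> simp

lemma wc_succ (s : Finset ℕ) {i j : ℕ} (h : i ≤ j) :
    wc s i (j + 1) = wc s i j + (if j + 1 ∈ s then 1 else 0) := by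
  rw [wc_split s h (Nat.le_succ j), wc_single]

lemma wc_insert {s : Finset ℕ} {x : ℕ} (hx : x ∉ s) (i j : ℕ) :
    wc (insert x s) i j = wc s i j + (if i < x ∧ x ≤ j then 1 else 0) := by
  unfold wc
  rw [Finset.filter_insert]
  by_cases hc : i < x ∧ x ≤ j
  · rw [if_pos hc, if_pos hc, Finset.card_insert_of_notMem]
    intro hmem
    exact hx (Finset.mem_of_mem_filter x hmem)
  · rw [if_neg hc, if_neg hc, Nat.add_zero]

lemma wc_notin_high {s : Finset ℕ} {j : ℕ} (hs : ∀ x ∈ s, x ≤ j) (i : ℕ) :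
    wc s i (j + 1) = wc s i j := by
  unfold wc
  congr 1
  apply Finset.filter_congr
  intro x hx
  have := hs x hx
  constructor <;> intro h <;> omega

/-! ### The scan step -/

def mstep (a b : Finset ℕ) (st : List ℕ × Finset ℕ × Finset ℕ × List ℕ) (j : ℕ) :
    List ℕ × Finset ℕ × Finset ℕ × List ℕ :=
  let stk : List ℕ := if j ∈ b then j :: st.1 else st.1
  if j ∈ a then
    match stk with
    | [] => ([], st.2.1, st.2.2.1, st.2.2.2 ++ [j])
    | x :: rest => (rest, insert x st.2.1, insert j st.2.2.1, st.2.2.2)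
  else (stk, st.2.1, st.2.2.1, st.2.2.2)

lemma scan_zero (a b : Finset ℕ) : scan 0 a b = ([], ∅, ∅, []) := rfl

lemma scan_succ (n : ℕ) (a b : Finset ℕ) :
    scan (n + 1) a b = mstep a b (scan n a b) (n + 1) := by
  unfold scan colsList mstep
  rw [List.range_succ, List.map_append, List.foldl_append]
  rfl
/-! ### mstep case lemmas -/

variable {a b : Finset ℕ} {j : ℕ} {stk : List ℕ} {mt mb : Finset ℕ} {ub : List ℕ}

lemma mstep_push (hb : j ∈ b) (ha : j ∉ a) :
    mstep a b (stk, mt, mb, ub) j = (j :: stk, mt, mb, ub) := by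
  simp [mstep, hb, ha]

lemma mstep_popb (hb : j ∈ b) (ha : j ∈ a) :
    mstep a b (stk, mt, mb, ub) j = (stk, insert j mt, insert j mb, ub) := by
  simp [mstep, hb, ha]

lemma mstep_none (hb : j ∉ b) (ha : j ∉ a) :
    mstep a b (stk, mt, mb, ub) j = (stk, mt, mb, ub) := by
  simp [mstep, hb, ha]

lemma mstep_emp (hb : j ∉ b) (ha : j ∈ a) :
    mstep a b (([] : List ℕ), mt, mb, ub) j = ([], mt, mb, ub ++ [j]) := by
  simp [mstep, hb, ha]

lemma mstep_pop {x0 : ℕ} {rest : List ℕ} (hb : j ∉ b) (ha : j ∈ a) :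
    mstep a b (x0 :: rest, mt, mb, ub) j = (rest, insert x0 mt, insert j mb, ub) := by
  simp [mstep, hb, ha]

/-! ### The min-formula function -/

def Pfun (a b : Finset ℕ) : ℕ → ℕ
  | 0 => 0
  | j + 1 => min (Pfun a b j + (if j + 1 ∈ a then 1 else 0)) (wc b 0 (j + 1))

/-! ### The scan invariant -/

structure SInv (a b : Finset ℕ) (j : ℕ) (stk : List ℕ) (mt mb : Finset ℕ) : Prop where
  sorted : stk.Pairwise (· > ·)
  stk_mem : ∀ x ∈ stk, x ∈ b ∧ 1 ≤ x ∧ x ≤ j ∧ x ∉ a ∧ x ∉ mt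
  mt_mem : ∀ x ∈ mt, x ∈ b ∧ 1 ≤ x ∧ x ≤ j
  mb_mem : ∀ x ∈ mb, x ∈ a ∧ 1 ≤ x ∧ x ≤ j
  cover : ∀ x, x ∈ b → 1 ≤ x → x ≤ j → x ∈ stk ∨ x ∈ mt
  mt_card : mt.card = mb.card
  len : stk.length + mt.card = wc b 0 j
  mb_card : mb.card = Pfun a b j
  invM : ∀ k, wc mt k j ≤ wc a k j
  inv1 : ∀ x ∈ stk, ∀ k, wc mt k x ≤ wc a k x
  inv2 : ∀ x ∈ stk, ∀ k, k ≤ j → wc a (x - 1) k ≤ wc mt x k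
/-! ### Preservation of the invariant -/

lemma Pfun_succ (a b : Finset ℕ) (j : ℕ) :
    Pfun a b (j + 1) = min (Pfun a b j + (if j + 1 ∈ a then 1 else 0)) (wc b 0 (j + 1)) := rfl

lemma sinv_zero (a b : Finset ℕ) : SInv a b 0 [] ∅ ∅ := by
  refine ⟨List.Pairwise.nil, ?_, ?_, ?_, ?_, rfl, ?_, rfl, ?_, ?_, ?_⟩ <;>
    simp [wc_zero, Pfun] <;> omega

lemma Pfun_le (a b : Finset ℕ) (j : ℕ) : Pfun a b j ≤ wc b 0 j := by
  cases j with
  | zero => simp [Pfun]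
  | succ j => exact min_le_right _ _

lemma step_push (IH : SInv a b n stk mt mb) (hb : n + 1 ∈ b) (ha : n + 1 ∉ a) :
    SInv a b (n + 1) ((n + 1) :: stk) mt mb := by
  have hmt_le : ∀ x ∈ mt, x ≤ n := fun x hx => (IH.mt_mem x hx).2.2
  have hmt_high : ∀ k, wc mt k (n + 1) = wc mt k n := fun k => wc_notin_high hmt_le k
  have hb_succ : wc b 0 (n + 1) = wc b 0 n + 1 := by rw [wc_succ b (Nat.zero_le n), if_pos hb]
  have hnmt : (n + 1) ∉ mt := fun h => by have := hmt_le _ h; omega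
  have ha_high : ∀ k, k ≤ n → wc a k (n + 1) = wc a k n := by
    intro k hk
    rw [wc_succ a hk, if_neg ha, Nat.add_zero]
  constructor
  · rw [List.pairwise_cons]
    exact ⟨fun y hy => by have := (IH.stk_mem y hy).2.2.1; omega, IH.sorted⟩
  · intro x hx
    rcases List.mem_cons.mp hx with h | h
    · subst h; exact ⟨hb, by omega, le_refl _, ha, hnmt⟩
    · obtain ⟨h1, h2, h3, h4, h5⟩ := IH.stk_mem x h
      exact ⟨h1, h2, by omega, h4, h5⟩
  · intro x hx
    obtain ⟨h1, h2, h3⟩ := IH.mt_mem x hx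
    exact ⟨h1, h2, by omega⟩
  · intro x hx
    obtain ⟨h1, h2, h3⟩ := IH.mb_mem x hx
    exact ⟨h1, h2, by omega⟩
  · intro x hxb hx1 hx2
    rcases Nat.lt_or_ge x (n + 1) with h | h
    · rcases IH.cover x hxb hx1 (by omega) with h' | h'
      · exact Or.inl (List.mem_cons_of_mem _ h')
      · exact Or.inr h'
    · have : x = n + 1 := by omega
      subst this
      exact Or.inl (List.mem_cons_self)
  · exact IH.mt_card
  · simp only [List.length_cons]
    rw [hb_succ]
    have := IH.len
    omega
  · have hP : Pfun a b (n + 1) = Pfun a b n := by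
      rw [Pfun_succ, if_neg ha, Nat.add_zero, hb_succ]
      exact min_eq_left (by have := Pfun_le a b n; omega)
    rw [hP]
    exact IH.mb_card
  · intro k
    rcases le_or_gt k n with hk | hk
    · rw [hmt_high, ha_high k hk]
      exact IH.invM k
    · rw [wc_zero mt (by omega)]
      exact Nat.zero_le _
  · intro x hx k
    rcases List.mem_cons.mp hx with h | h
    · subst h
      rw [hmt_high]
      rcases le_or_gt k n with hk | hk
      · rw [ha_high k hk]; exact IH.invM k
      · rw [wc_zero mt (by omega)]; exact Nat.zero_le _
    · exact IH.inv1 x h k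
  · intro x hx k hk
    rcases List.mem_cons.mp hx with h | h
    · subst h
      have : wc a n k = 0 := by
        rcases le_or_gt k n with h' | h'
        · exact wc_zero a h'
        · have : k = n + 1 := by omega
          subst this
          rw [wc_single, if_neg ha]
      simpa using this.le.trans (Nat.zero_le _)
    · obtain ⟨h1, h2, h3, h4, h5⟩ := IH.stk_mem x h
      rcases le_or_gt k n with hk' | hk'
      · exact IH.inv2 x h k hk'
      · have hkeq : k = n + 1 := by omega
        subst hkeq
        rw [ha_high (x - 1) (by omega)]  -- x - 1 ≤ n
        rw [wc_succ mt (by omega), if_neg hnmt, Nat.add_zero]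
        exact IH.inv2 x h n (le_refl n)
lemma step_popb (IH : SInv a b n stk mt mb) (hb : n + 1 ∈ b) (ha : n + 1 ∈ a) :
    SInv a b (n + 1) stk (insert (n + 1) mt) (insert (n + 1) mb) := by
  have hmt_le : ∀ x ∈ mt, x ≤ n := fun x hx => (IH.mt_mem x hx).2.2
  have hmt_high : ∀ k, wc mt k (n + 1) = wc mt k n := fun k => wc_notin_high hmt_le k
  have hb_succ : wc b 0 (n + 1) = wc b 0 n + 1 := by
    rw [wc_succ b (Nat.zero_le n), if_pos hb]
  have hnmt : (n + 1) ∉ mt := fun h => by have := hmt_le _ h; omega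
  have hnmb : (n + 1) ∉ mb := fun h => by have := (IH.mb_mem _ h).2.2; omega
  have ha_succ : ∀ k, k ≤ n → wc a k (n + 1) = wc a k n + 1 := by
    intro k hk
    rw [wc_succ a hk, if_pos ha]
  constructor
  · exact IH.sorted
  · intro x hx
    obtain ⟨h1, h2, h3, h4, h5⟩ := IH.stk_mem x hx
    refine ⟨h1, h2, by omega, h4, ?_⟩
    rw [Finset.mem_insert]
    rintro (h | h)
    · omega
    · exact h5 h
  · intro x hx
    rcases Finset.mem_insert.mp hx with h | h
    · subst h; exact ⟨hb, by omega, le_refl _⟩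
    · obtain ⟨h1, h2, h3⟩ := IH.mt_mem x h
      exact ⟨h1, h2, by omega⟩
  · intro x hx
    rcases Finset.mem_insert.mp hx with h | h
    · subst h; exact ⟨ha, by omega, le_refl _⟩
    · obtain ⟨h1, h2, h3⟩ := IH.mb_mem x h
      exact ⟨h1, h2, by omega⟩
  · intro x hxb hx1 hx2
    rcases le_or_gt x n with h | h
    · rcases IH.cover x hxb hx1 h with h' | h'
      · exact Or.inl h'
      · exact Or.inr (Finset.mem_insert_of_mem h')
    · have : x = n + 1 := by omega
      subst this
      exact Or.inr (Finset.mem_insert_self _ _)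
  · rw [Finset.card_insert_of_notMem hnmt, Finset.card_insert_of_notMem hnmb, IH.mt_card]
  · rw [Finset.card_insert_of_notMem hnmt, hb_succ]
    have := IH.len
    omega
  · rw [Finset.card_insert_of_notMem hnmb, Pfun_succ, if_pos ha, hb_succ]
    have h1 : Pfun a b n = mt.card := by rw [← IH.mb_card, IH.mt_card]
    have h2 : mt.card ≤ wc b 0 n := by have := IH.len; omega
    rw [IH.mb_card]
    omega
  · intro k
    rcases le_or_gt k n with hk | hk
    · rw [wc_insert hnmt, hmt_high, ha_succ k hk]
      have := IH.invM k
      split <;> omega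
    · rw [wc_zero _ (by omega : n + 1 ≤ k)]
      exact Nat.zero_le _
  · intro x hx k
    obtain ⟨h1, h2, h3, h4, h5⟩ := IH.stk_mem x hx
    rw [wc_insert hnmt, if_neg (by omega : ¬(k < n + 1 ∧ n + 1 ≤ x)), Nat.add_zero]
    exact IH.inv1 x hx k
  · intro x hx k hk
    obtain ⟨h1, h2, h3, h4, h5⟩ := IH.stk_mem x hx
    rcases le_or_gt k n with hk' | hk'
    · rw [wc_insert hnmt]
      have := IH.inv2 x hx k hk'
      split <;> omega
    · have hkeq : k = n + 1 := by omega
      subst hkeq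
      rw [ha_succ (x - 1) (by omega), wc_insert hnmt,
        if_pos (by omega : x < n + 1 ∧ n + 1 ≤ n + 1), hmt_high]
      have := IH.inv2 x hx n (le_refl n)
      omega

lemma step_none (IH : SInv a b n stk mt mb) (hb : n + 1 ∉ b) (ha : n + 1 ∉ a) :
    SInv a b (n + 1) stk mt mb := by
  have hmt_le : ∀ x ∈ mt, x ≤ n := fun x hx => (IH.mt_mem x hx).2.2
  have hmt_high : ∀ k, wc mt k (n + 1) = wc mt k n := fun k => wc_notin_high hmt_le k
  have hb_succ : wc b 0 (n + 1) = wc b 0 n := by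
    rw [wc_succ b (Nat.zero_le n), if_neg hb, Nat.add_zero]
  have ha_high : ∀ k, k ≤ n → wc a k (n + 1) = wc a k n := by
    intro k hk
    rw [wc_succ a hk, if_neg ha, Nat.add_zero]
  constructor
  · exact IH.sorted
  · intro x hx
    obtain ⟨h1, h2, h3, h4, h5⟩ := IH.stk_mem x hx
    exact ⟨h1, h2, by omega, h4, h5⟩
  · intro x hx
    obtain ⟨h1, h2, h3⟩ := IH.mt_mem x hx
    exact ⟨h1, h2, by omega⟩
  · intro x hx
    obtain ⟨h1, h2, h3⟩ := IH.mb_mem x hx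
    exact ⟨h1, h2, by omega⟩
  · intro x hxb hx1 hx2
    rcases le_or_gt x n with h | h
    · exact IH.cover x hxb hx1 h
    · have : x = n + 1 := by omega
      subst this
      exact absurd hxb hb
  · exact IH.mt_card
  · rw [hb_succ]; exact IH.len
  · rw [Pfun_succ, if_neg ha, Nat.add_zero, hb_succ]
    rw [min_eq_left (Pfun_le a b n)]
    exact IH.mb_card
  · intro k
    rcases le_or_gt k n with hk | hk
    · rw [hmt_high, ha_high k hk]
      exact IH.invM k
    · rw [wc_zero _ (by omega : n + 1 ≤ k)]
      exact Nat.zero_le _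
  · exact IH.inv1
  · intro x hx k hk
    obtain ⟨h1, h2, h3, h4, h5⟩ := IH.stk_mem x hx
    rcases le_or_gt k n with hk' | hk'
    · exact IH.inv2 x hx k hk'
    · have hkeq : k = n + 1 := by omega
      subst hkeq
      rw [ha_high (x - 1) (by omega), hmt_high]
      exact IH.inv2 x hx n (le_refl n)

lemma step_emp (IH : SInv a b n [] mt mb) (hb : n + 1 ∉ b) (ha : n + 1 ∈ a) :
    SInv a b (n + 1) [] mt mb := by
  have hmt_le : ∀ x ∈ mt, x ≤ n := fun x hx => (IH.mt_mem x hx).2.2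
  have hmt_high : ∀ k, wc mt k (n + 1) = wc mt k n := fun k => wc_notin_high hmt_le k
  have hb_succ : wc b 0 (n + 1) = wc b 0 n := by
    rw [wc_succ b (Nat.zero_le n), if_neg hb, Nat.add_zero]
  constructor
  · exact List.Pairwise.nil
  · intro x hx; cases hx
  · intro x hx
    obtain ⟨h1, h2, h3⟩ := IH.mt_mem x hx
    exact ⟨h1, h2, by omega⟩
  · intro x hx
    obtain ⟨h1, h2, h3⟩ := IH.mb_mem x hx
    exact ⟨h1, h2, by omega⟩
  · intro x hxb hx1 hx2
    rcases le_or_gt x n with h | h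
    · exact IH.cover x hxb hx1 h
    · have hx : x = n + 1 := by omega
      subst hx
      exact absurd hxb hb
  · exact IH.mt_card
  · rw [hb_succ]; exact IH.len
  · rw [Pfun_succ, if_pos ha, hb_succ]
    have h1 : Pfun a b n = mt.card := by rw [← IH.mb_card, IH.mt_card]
    have h2 : wc b 0 n = mt.card := by have := IH.len; simpa using this.symm
    rw [IH.mb_card]
    omega
  · intro k
    rcases le_or_gt k n with hk | hk
    · rw [hmt_high]
      exact (IH.invM k).trans (wc_mono a k (Nat.le_succ n))
    · rw [wc_zero _ (by omega : n + 1 ≤ k)]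
      exact Nat.zero_le _
  · intro x hx; cases hx
  · intro x hx; cases hx

lemma step_pop {x0 : ℕ} {rest : List ℕ} (IH : SInv a b n (x0 :: rest) mt mb)
    (hb : n + 1 ∉ b) (ha : n + 1 ∈ a) :
    SInv a b (n + 1) rest (insert x0 mt) (insert (n + 1) mb) := by
  have hmt_le : ∀ x ∈ mt, x ≤ n := fun x hx => (IH.mt_mem x hx).2.2
  obtain ⟨hx0b, hx01, hx0n, hx0a, hx0mt⟩ := IH.stk_mem x0 (List.mem_cons_self)
  have hrest_lt : ∀ y ∈ rest, y < x0 := fun y hy => (List.pairwise_cons.mp IH.sorted).1 y hy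
  have hmt'_le : ∀ x ∈ insert x0 mt, x ≤ n := by
    intro x hx
    rcases Finset.mem_insert.mp hx with h | h
    · omega
    · exact hmt_le x h
  have hmt'_high : ∀ k, wc (insert x0 mt) k (n + 1) = wc (insert x0 mt) k n :=
    fun k => wc_notin_high hmt'_le k
  have hb_succ : wc b 0 (n + 1) = wc b 0 n := by
    rw [wc_succ b (Nat.zero_le n), if_neg hb, Nat.add_zero]
  have hnmb : (n + 1) ∉ mb := fun h => by have := (IH.mb_mem _ h).2.2; omega
  have ha_succ : ∀ k, k ≤ n → wc a k (n + 1) = wc a k n + 1 := by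
    intro k hk
    rw [wc_succ a hk, if_pos ha]
  constructor
  · exact (List.pairwise_cons.mp IH.sorted).2
  · intro y hy
    obtain ⟨h1, h2, h3, h4, h5⟩ := IH.stk_mem y (List.mem_cons_of_mem _ hy)
    refine ⟨h1, h2, by omega, h4, ?_⟩
    rw [Finset.mem_insert]
    rintro (h | h)
    · exact absurd h (by have := hrest_lt y hy; omega)
    · exact h5 h
  · intro x hx
    rcases Finset.mem_insert.mp hx with h | h
    · subst h; exact ⟨hx0b, hx01, by omega⟩
    · obtain ⟨h1, h2, h3⟩ := IH.mt_mem x h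
      exact ⟨h1, h2, by omega⟩
  · intro x hx
    rcases Finset.mem_insert.mp hx with h | h
    · subst h; exact ⟨ha, by omega, le_refl _⟩
    · obtain ⟨h1, h2, h3⟩ := IH.mb_mem x h
      exact ⟨h1, h2, by omega⟩
  · intro x hxb hx1 hx2
    rcases le_or_gt x n with h | h
    · rcases IH.cover x hxb hx1 h with h' | h'
      · rcases List.mem_cons.mp h' with h'' | h''
        · exact Or.inr (h'' ▸ Finset.mem_insert_self _ _)
        · exact Or.inl h''
      · exact Or.inr (Finset.mem_insert_of_mem h')
    · have hx : x = n + 1 := by omega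
      subst hx
      exact absurd hxb hb
  · rw [Finset.card_insert_of_notMem hx0mt, Finset.card_insert_of_notMem hnmb, IH.mt_card]
  · rw [Finset.card_insert_of_notMem hx0mt, hb_succ]
    have := IH.len
    simp only [List.length_cons] at this
    omega
  · rw [Finset.card_insert_of_notMem hnmb, Pfun_succ, if_pos ha, hb_succ]
    have h1 : Pfun a b n = mt.card := by rw [← IH.mb_card, IH.mt_card]
    have h2 : mt.card + 1 ≤ wc b 0 n := by
      have := IH.len
      simp only [List.length_cons] at this
      omega
    rw [IH.mb_card]
    omega
  · intro k
    rcases le_or_gt k n with hk | hk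
    · rw [hmt'_high, wc_insert hx0mt, ha_succ k hk]
      have := IH.invM k
      split <;> omega
    · rw [wc_zero _ (by omega : n + 1 ≤ k)]
      exact Nat.zero_le _
  · intro y hy k
    have hylt := hrest_lt y hy
    rw [wc_insert hx0mt, if_neg (by omega : ¬(k < x0 ∧ x0 ≤ y)), Nat.add_zero]
    exact IH.inv1 y (List.mem_cons_of_mem _ hy) k
  · intro y hy k hk
    have hylt := hrest_lt y hy
    obtain ⟨h1, h2, h3, h4, h5⟩ := IH.stk_mem y (List.mem_cons_of_mem _ hy)
    rcases le_or_gt k n with hk' | hk'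
    · rw [wc_insert hx0mt]
      have := IH.inv2 y (List.mem_cons_of_mem _ hy) k hk'
      split <;> omega
    · have hkeq : k = n + 1 := by omega
      subst hkeq
      rw [ha_succ (y - 1) (by omega), hmt'_high, wc_insert hx0mt,
        if_pos (by omega : y < x0 ∧ x0 ≤ n)]
      have := IH.inv2 y (List.mem_cons_of_mem _ hy) n (le_refl n)
      have hmono : wc mt y n ≥ wc mt y n := le_refl _
      omega

theorem scan_inv (a b : Finset ℕ) :
    ∀ n, SInv a b n (scan n a b).1 (scan n a b).2.1 (scan n a b).2.2.1 := by
  intro n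
  induction n with
  | zero => rw [scan_zero]; exact sinv_zero a b
  | succ n IH =>
    rcases hsc : scan n a b with ⟨stk, mt, mb, ub⟩
    rw [hsc] at IH
    rw [scan_succ, hsc]
    by_cases hb : (n + 1) ∈ b <;> by_cases ha : (n + 1) ∈ a
    · rw [mstep_popb hb ha]
      exact step_popb IH hb ha
    · rw [mstep_push hb ha]
      exact step_push IH hb ha
    · cases stk with
      | nil => rw [mstep_emp hb ha]; exact step_emp IH hb ha
      | cons x0 rest => rw [mstep_pop hb ha]; exact step_pop IH hb ha
    · rw [mstep_none hb ha]
      exact step_none IH hb ha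
/-! ### Closed form bounds for Pfun -/

lemma Plow (a b : Finset ℕ) : ∀ j, ∀ i, i ≤ j → Pfun a b j ≤ wc b 0 i + wc a i j := by
  intro j
  induction j with
  | zero =>
    intro i hi
    have : i = 0 := by omega
    subst this
    simp [Pfun]
  | succ j IHj =>
    intro i hi
    rcases eq_or_lt_of_le hi with rfl | h
    · rw [wc_zero a (le_refl _)]
      have := Pfun_le a b (j + 1)
      omega
    · have hij : i ≤ j := by omega
      have h1 : Pfun a b (j + 1) ≤ Pfun a b j + (if j + 1 ∈ a then 1 else 0) :=
        min_le_left _ _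
      have h2 := IHj i hij
      rw [wc_succ a hij]
      by_cases hja : j + 1 ∈ a
      · rw [if_pos hja] at h1 ⊢
        omega
      · rw [if_neg hja] at h1 ⊢
        omega

lemma Pwit (a b : Finset ℕ) : ∀ j, ∃ i, i ≤ j ∧ Pfun a b j = wc b 0 i + wc a i j := by
  intro j
  induction j with
  | zero => exact ⟨0, le_refl _, by simp [Pfun, wc_zero]⟩
  | succ j IHj =>
    rcases le_total (Pfun a b j + (if j + 1 ∈ a then 1 else 0)) (wc b 0 (j + 1)) with h | h
    · obtain ⟨i, hi, heq⟩ := IHj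
      refine ⟨i, by omega, ?_⟩
      rw [Pfun_succ, min_eq_left h, wc_succ a hi, heq]
      omega
    · refine ⟨j + 1, le_refl _, ?_⟩
      rw [Pfun_succ, min_eq_right h, wc_zero a (le_refl _)]
      omega

/-! ### Consequences for theta and matchedTop -/

lemma theta_mem (n : ℕ) (s t : Finset ℕ) : ∀ x ∈ theta n s t, x ∈ s ∧ 1 ≤ x ∧ x ≤ n :=
  (scan_inv s t n).mb_mem

lemma mtop_mem (n : ℕ) (s t : Finset ℕ) : ∀ x ∈ matchedTop n s t, x ∈ t ∧ 1 ≤ x ∧ x ≤ n :=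
  (scan_inv s t n).mt_mem

lemma wc_all {s : Finset ℕ} {j : ℕ} (h : ∀ x ∈ s, 1 ≤ x ∧ x ≤ j) : wc s 0 j = s.card := by
  unfold wc
  congr 1
  apply Finset.filter_true_of_mem
  intro x hx
  have := h x hx
  omega

lemma theta_succ_cases (n : ℕ) (a b : Finset ℕ) :
    theta (n + 1) a b = theta n a b ∨ theta (n + 1) a b = insert (n + 1) (theta n a b) := by
  unfold theta
  rcases hsc : scan n a b with ⟨stk, mt, mb, ub⟩
  rw [scan_succ, hsc]
  by_cases hb : (n + 1) ∈ b <;> by_cases ha : (n + 1) ∈ a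
  · rw [mstep_popb hb ha]; right; rfl
  · rw [mstep_push hb ha]; left; rfl
  · cases stk with
    | nil => rw [mstep_emp hb ha]; left; rfl
    | cons x0 rest => rw [mstep_pop hb ha]; right; rfl
  · rw [mstep_none hb ha]; left; rfl

lemma pc_theta (a b : Finset ℕ) : ∀ n i, i ≤ n → wc (theta n a b) 0 i = Pfun a b i := by
  intro n
  induction n with
  | zero =>
    intro i hi
    have : i = 0 := by omega
    subst this
    simp [Pfun, wc_zero]
  | succ n IHn =>
    intro i hi
    rcases eq_or_lt_of_le hi with rfl | h
    · rw [wc_all (fun x hx => (theta_mem _ _ _ x hx).2)]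
      exact (scan_inv a b (n + 1)).mb_card
    · have hin : i ≤ n := by omega
      have hnot : (n + 1) ∉ theta n a b := by
        intro hmem
        have := (theta_mem n a b _ hmem).2.2
        omega
      rcases theta_succ_cases n a b with hc | hc
      · rw [hc]; exact IHn i hin
      · rw [hc, wc_insert hnot, if_neg (by omega), Nat.add_zero]
        exact IHn i hin

lemma eq_of_wc {A B : Finset ℕ} {n : ℕ} (hA : ∀ x ∈ A, 1 ≤ x ∧ x ≤ n)
    (hB : ∀ x ∈ B, 1 ≤ x ∧ x ≤ n)
    (h : ∀ j, j ≤ n → wc A 0 j = wc B 0 j) : A = B := by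
  ext x
  by_cases hx1 : 1 ≤ x ∧ x ≤ n
  · obtain ⟨hx1', hx2⟩ := hx1
    cases x with
    | zero => omega
    | succ k =>
      have e1 := wc_succ A (Nat.zero_le k)
      have e2 := wc_succ B (Nat.zero_le k)
      have h1 := h (k + 1) hx2
      have h2 := h k (by omega)
      constructor
      · intro hx
        by_contra hB'
        rw [if_pos hx] at e1
        rw [if_neg hB'] at e2
        omega
      · intro hx
        by_contra hA'
        rw [if_pos hx] at e2
        rw [if_neg hA'] at e1
        omega
  · constructor
    · intro hx; exact absurd (hA x hx) hx1
    · intro hx; exact absurd (hB x hx) hx1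

lemma mstep_congr {a a' b b' : Finset ℕ} {j : ℕ} (ha : j ∈ a ↔ j ∈ a') (hb : j ∈ b ↔ j ∈ b')
    (st : List ℕ × Finset ℕ × Finset ℕ × List ℕ) : mstep a b st j = mstep a' b' st j := by
  rcases st with ⟨stk, mt, mb, ub⟩
  by_cases h1 : j ∈ a <;> by_cases h2 : j ∈ b
  · rw [mstep_popb h2 h1, mstep_popb (hb.mp h2) (ha.mp h1)]
  · cases stk with
    | nil => rw [mstep_emp h2 h1, mstep_emp (fun h => h2 (hb.mpr h)) (ha.mp h1)]
    | cons x r => rw [mstep_pop h2 h1, mstep_pop (fun h => h2 (hb.mpr h)) (ha.mp h1)]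
  · rw [mstep_push h2 h1, mstep_push (hb.mp h2) (fun h => h1 (ha.mpr h))]
  · rw [mstep_none h2 h1, mstep_none (fun h => h2 (hb.mpr h)) (fun h => h1 (ha.mpr h))]

lemma scan_congr {a a' b b' : Finset ℕ} : ∀ n : ℕ,
    (∀ j, 1 ≤ j → j ≤ n → (j ∈ a ↔ j ∈ a')) →
    (∀ j, 1 ≤ j → j ≤ n → (j ∈ b ↔ j ∈ b')) →
    scan n a b = scan n a' b' := by
  intro n
  induction n with
  | zero => intro _ _; rfl
  | succ n IHn =>
    intro hA hB
    rw [scan_succ, scan_succ,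
      IHn (fun j h1 h2 => hA j h1 (by omega)) (fun j h1 h2 => hB j h1 (by omega))]
    exact mstep_congr (hA (n + 1) (by omega) (le_refl _)) (hB (n + 1) (by omega) (le_refl _)) _
lemma wc_anti_left (s : Finset ℕ) {i i' : ℕ} (h : i ≤ i') (j : ℕ) : wc s i' j ≤ wc s i j := by
  apply Finset.card_le_card
  intro x hx
  simp only [Finset.mem_filter] at hx ⊢
  exact ⟨hx.1, by omega, hx.2.2⟩

lemma wc_le (s : Finset ℕ) (j : ℕ) : wc s 0 j ≤ j := by
  unfold wc
  calc (s.filter fun y => 0 < y ∧ y ≤ j).card ≤ (Finset.Icc 1 j).card := by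
        apply Finset.card_le_card
        intro x hx
        simp only [Finset.mem_filter] at hx
        simp only [Finset.mem_Icc]
        omega
    _ = j := by rw [Nat.card_Icc]; omega

lemma wc_icc {n j : ℕ} (h : j ≤ n) : wc (Finset.Icc 1 n) 0 j = j := by
  unfold wc
  have he : (Finset.Icc 1 n).filter (fun y => 0 < y ∧ y ≤ j) = Finset.Icc 1 j := by
    ext x
    simp only [Finset.mem_filter, Finset.mem_Icc]
    omega
  rw [he, Nat.card_Icc]
  omega

lemma Pfun_icc (s : Finset ℕ) (n : ℕ) : ∀ j, j ≤ n → Pfun s (Finset.Icc 1 n) j = wc s 0 j := by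
  intro j
  induction j with
  | zero => intro _; simp [Pfun, wc_zero]
  | succ j IH =>
    intro h
    rw [Pfun_succ, IH (by omega), wc_icc h, wc_succ s (Nat.zero_le j)]
    have h1 := wc_le s j
    split <;> omega

lemma theta_full (s : Finset ℕ) (n : ℕ) : theta n s (Finset.Icc 1 n) = s ∩ Finset.Icc 1 n := by
  apply eq_of_wc (n := n)
  · exact fun x hx => (theta_mem _ _ _ x hx).2
  · intro x hx
    rcases Finset.mem_inter.mp hx with ⟨_, hx2⟩
    exact Finset.mem_Icc.mp hx2
  · intro j hj
    rw [pc_theta s (Finset.Icc 1 n) n j hj, Pfun_icc s n j hj]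
    unfold wc
    congr 1
    ext x
    simp only [Finset.mem_filter, Finset.mem_inter, Finset.mem_Icc]
    constructor
    · rintro ⟨hx, h1, h2⟩; exact ⟨⟨hx, by omega, by omega⟩, h1, h2⟩
    · rintro ⟨⟨hx, _, _⟩, h1, h2⟩; exact ⟨hx, h1, h2⟩

lemma theta_congr {a a' b b' : Finset ℕ} (n : ℕ)
    (hA : ∀ j, 1 ≤ j → j ≤ n → (j ∈ a ↔ j ∈ a'))
    (hB : ∀ j, 1 ≤ j → j ≤ n → (j ∈ b ↔ j ∈ b')) : theta n a b = theta n a' b' := by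
  unfold theta
  rw [scan_congr n hA hB]

lemma mtop_congr {a a' b b' : Finset ℕ} (n : ℕ)
    (hA : ∀ j, 1 ≤ j → j ≤ n → (j ∈ a ↔ j ∈ a'))
    (hB : ∀ j, 1 ≤ j → j ≤ n → (j ∈ b ↔ j ∈ b')) : matchedTop n a b = matchedTop n a' b' := by
  unfold matchedTop
  rw [scan_congr n hA hB]

/-! ### The core collapsing lemma -/

theorem core (n : ℕ) (a b T : Finset ℕ) :
    theta n a (theta n b T) =
      theta n (a ∪ (b \ matchedTop n a b)) (theta n (matchedTop n a b) T) := by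
  have SI := scan_inv a b n
  set m : Finset ℕ := matchedTop n a b with hm
  set A : Finset ℕ := a ∪ (b \ m) with hA
  set u : Finset ℕ := (b ∩ Finset.Icc 1 n) \ m with hu
  have hmdef : (scan n a b).2.1 = m := rfl
  -- facts about u
  have hu_stk : ∀ x ∈ u, x ∈ (scan n a b).1 := by
    intro x hx
    rw [hu, Finset.mem_sdiff, Finset.mem_inter, Finset.mem_Icc] at hx
    obtain ⟨⟨hxb, hx1, hx2⟩, hxm⟩ := hx
    rcases SI.cover x hxb hx1 hx2 with h | h
    · exact h
    · exact absurd (hmdef ▸ h) hxm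
  have hu_a : ∀ x ∈ u, x ∉ a := fun x hx => (SI.stk_mem x (hu_stk x hx)).2.2.2.1
  have hu_bIcc : ∀ x ∈ u, x ∈ b ∧ 1 ≤ x ∧ x ≤ n := by
    intro x hx
    rw [hu, Finset.mem_sdiff, Finset.mem_inter, Finset.mem_Icc] at hx
    exact ⟨hx.1.1, hx.1.2.1, hx.1.2.2⟩
  have hU1 : ∀ x ∈ u, ∀ k, wc m k x ≤ wc a k x := by
    intro x hx k
    exact hmdef ▸ SI.inv1 x (hu_stk x hx) k
  have hU2 : ∀ x ∈ u, ∀ k, k ≤ n → wc a (x - 1) k ≤ wc m x k := by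
    intro x hx k hk
    exact hmdef ▸ SI.inv2 x (hu_stk x hx) k hk
  have hm_mem : ∀ x ∈ m, x ∈ b ∧ 1 ≤ x ∧ x ≤ n := hmdef ▸ SI.mt_mem
  have hmu : ∀ x ∈ m, x ∉ u := by
    intro x hxm hxu
    rw [hu, Finset.mem_sdiff] at hxu
    exact hxu.2 hxm
  -- window decompositions
  have hbwc : ∀ i j, j ≤ n → wc b i j = wc m i j + wc u i j := by
    intro i j hj
    unfold wc
    rw [← Finset.card_union_of_disjoint]
    · congr 1
      ext y
      simp only [Finset.mem_union, Finset.mem_filter]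
      constructor
      · rintro ⟨hy, h1, h2⟩
        by_cases hym : y ∈ m
        · exact Or.inl ⟨hym, h1, h2⟩
        · refine Or.inr ⟨?_, h1, h2⟩
          rw [hu, Finset.mem_sdiff, Finset.mem_inter, Finset.mem_Icc]
          exact ⟨⟨hy, by omega, by omega⟩, hym⟩
      · rintro (⟨hy, h1, h2⟩ | ⟨hy, h1, h2⟩)
        · exact ⟨(hm_mem y hy).1, h1, h2⟩
        · exact ⟨(hu_bIcc y hy).1, h1, h2⟩
    · rw [Finset.disjoint_left]
      intro y hy hy'
      simp only [Finset.mem_filter] at hy hy'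
      exact hmu y hy.1 hy'.1
  have hAwc : ∀ i j, j ≤ n → wc A i j = wc a i j + wc u i j := by
    intro i j hj
    unfold wc
    rw [← Finset.card_union_of_disjoint]
    · congr 1
      ext y
      simp only [Finset.mem_union, Finset.mem_filter]
      constructor
      · rintro ⟨hy, h1, h2⟩
        rw [hA, Finset.mem_union, Finset.mem_sdiff] at hy
        rcases hy with hy | ⟨hyb, hym⟩
        · exact Or.inl ⟨hy, h1, h2⟩
        · refine Or.inr ⟨?_, h1, h2⟩
          rw [hu, Finset.mem_sdiff, Finset.mem_inter, Finset.mem_Icc]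
          exact ⟨⟨hyb, by omega, by omega⟩, hym⟩
      · rintro (⟨hy, h1, h2⟩ | ⟨hy, h1, h2⟩)
        · exact ⟨Finset.mem_union_left _ hy, h1, h2⟩
        · refine ⟨Finset.mem_union_right _ ?_, h1, h2⟩
          rw [Finset.mem_sdiff]
          rw [hu, Finset.mem_sdiff, Finset.mem_inter] at hy
          exact ⟨hy.1.1, hy.2⟩
    · rw [Finset.disjoint_left]
      intro y hy hy'
      simp only [Finset.mem_filter] at hy hy'
      exact hu_a y hy'.1 hy.1
  -- the main count identity
  apply eq_of_wc (n := n)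
  · exact fun x hx => (theta_mem _ _ _ x hx).2
  · exact fun x hx => (theta_mem _ _ _ x hx).2
  intro j hj
  rw [pc_theta a (theta n b T) n j hj, pc_theta A (theta n m T) n j hj]
  apply le_antisymm
  · -- Pfun a B' j ≤ Pfun A M' j
    obtain ⟨i, hij, hieq⟩ := Pwit A (theta n m T) j
    rw [hieq, pc_theta m T n i (by omega), hAwc i j hj]
    obtain ⟨i', hi'i, hi'eq⟩ := Pwit m T i
    rw [hi'eq]
    by_cases hW : wc u i' i = 0
    · calc Pfun a (theta n b T) j
          ≤ wc (theta n b T) 0 i + wc a i j := Plow _ _ j i hij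
        _ = Pfun b T i + wc a i j := by rw [pc_theta b T n i (by omega)]
        _ ≤ (wc T 0 i' + wc b i' i) + wc a i j := by
            have := Plow b T i i' hi'i
            omega
        _ = (wc T 0 i' + wc m i' i) + wc a i j := by rw [hbwc i' i (by omega), hW]; omega
        _ ≤ wc T 0 i' + wc m i' i + (wc a i j + wc u i j) := by omega
    · have hWne : (u.filter fun y => i' < y ∧ y ≤ i).Nonempty := by
        rw [← Finset.card_pos]
        have : wc u i' i ≠ 0 := hW
        unfold wc at this
        omega
      set x := (u.filter fun y => i' < y ∧ y ≤ i).min' hWne with hx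
      have hxmem := Finset.min'_mem _ hWne
      rw [Finset.mem_filter] at hxmem
      obtain ⟨hxu, hxgt, hxle⟩ := hxmem
      have hx1 : 1 ≤ x := (hu_bIcc x hxu).2.1
      have hxn : x ≤ n := (hu_bIcc x hxu).2.2
      have hmin0 : wc u i' (x - 1) = 0 := by
        unfold wc
        rw [Finset.card_eq_zero, Finset.filter_eq_empty_iff]
        intro y hy
        rintro ⟨hy1, hy2⟩
        have hymem : y ∈ u.filter fun y => i' < y ∧ y ≤ i :=
          Finset.mem_filter.mpr ⟨hy, hy1, by omega⟩
        have := Finset.min'_le _ y hymem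
        omega
      calc Pfun a (theta n b T) j
          ≤ wc (theta n b T) 0 (x - 1) + wc a (x - 1) j := Plow _ _ j (x - 1) (by omega)
        _ = Pfun b T (x - 1) + wc a (x - 1) j := by rw [pc_theta b T n (x - 1) (by omega)]
        _ ≤ (wc T 0 i' + wc b i' (x - 1)) + wc a (x - 1) j := by
            have := Plow b T (x - 1) i' (by omega)
            omega
        _ = (wc T 0 i' + wc m i' (x - 1)) + wc a (x - 1) j := by
            rw [hbwc i' (x - 1) (by omega), hmin0]
            omega
        _ = (wc T 0 i' + wc m i' (x - 1)) + (wc a (x - 1) i + wc a i j) := by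
            rw [← wc_split a (by omega : x - 1 ≤ i) hij]
        _ ≤ (wc T 0 i' + wc m i' (x - 1)) + (wc m x i + wc a i j) := by
            have := hU2 x hxu i (by omega)
            omega
        _ ≤ (wc T 0 i' + wc m i' (x - 1)) + (wc m (x - 1) i + wc a i j) := by
            have := wc_anti_left m (by omega : x - 1 ≤ x) i
            omega
        _ = (wc T 0 i' + wc m i' i) + wc a i j := by
            rw [wc_split m (by omega : i' ≤ x - 1) (by omega : x - 1 ≤ i)]
            omega
        _ ≤ wc T 0 i' + wc m i' i + (wc a i j + wc u i j) := by omega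
  · -- Pfun A M' j ≤ Pfun a B' j
    obtain ⟨k, hkj, hkeq⟩ := Pwit a (theta n b T) j
    rw [hkeq, pc_theta b T n k (by omega)]
    obtain ⟨i', hi'k, hi'eq⟩ := Pwit b T k
    rw [hi'eq]
    by_cases hW : wc u k j = 0
    · calc Pfun A (theta n m T) j
          ≤ wc (theta n m T) 0 k + wc A k j := Plow _ _ j k hkj
        _ = Pfun m T k + (wc a k j + wc u k j) := by
            rw [pc_theta m T n k (by omega), hAwc k j hj]
        _ ≤ (wc T 0 i' + wc m i' k) + (wc a k j + 0) := by
            have := Plow m T k i' hi'k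
            omega
        _ ≤ (wc T 0 i' + wc b i' k) + wc a k j := by
            have := hbwc i' k (by omega)
            omega
    · have hWne : (u.filter fun y => k < y ∧ y ≤ j).Nonempty := by
        rw [← Finset.card_pos]
        have : wc u k j ≠ 0 := hW
        unfold wc at this
        omega
      set x := (u.filter fun y => k < y ∧ y ≤ j).max' hWne with hx
      have hxmem := Finset.max'_mem _ hWne
      rw [Finset.mem_filter] at hxmem
      obtain ⟨hxu, hxgt, hxle⟩ := hxmem
      have hxn : x ≤ n := (hu_bIcc x hxu).2.2
      have hmax0 : wc u x j = 0 := by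
        unfold wc
        rw [Finset.card_eq_zero, Finset.filter_eq_empty_iff]
        intro y hy
        rintro ⟨hy1, hy2⟩
        have hymem : y ∈ u.filter fun y => k < y ∧ y ≤ j :=
          Finset.mem_filter.mpr ⟨hy, by omega, hy2⟩
        have := Finset.le_max' _ y hymem
        omega
      calc Pfun A (theta n m T) j
          ≤ wc (theta n m T) 0 x + wc A x j := Plow _ _ j x (by omega)
        _ = Pfun m T x + (wc a x j + wc u x j) := by
            rw [pc_theta m T n x (by omega), hAwc x j hj]
        _ = Pfun m T x + wc a x j := by rw [hmax0]; omega
        _ ≤ (wc T 0 i' + wc m i' x) + wc a x j := by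
            have := Plow m T x i' (by omega)
            omega
        _ = (wc T 0 i' + (wc m i' k + wc m k x)) + wc a x j := by
            rw [← wc_split m (by omega : i' ≤ k) (by omega : k ≤ x)]
        _ ≤ (wc T 0 i' + (wc b i' k + wc a k x)) + wc a x j := by
            have h1 := hU1 x hxu k
            have h2 := hbwc i' k (by omega)
            omega
        _ = (wc T 0 i' + wc b i' k) + wc a k j := by
            rw [wc_split a (by omega : k ≤ x) (by omega : x ≤ j)]
            omega
/-! ### Collapsing two rows -/

lemma collapse_two (n : ℕ) (a b : Finset ℕ) :
    theta n a b = theta n (a ∪ (b \ matchedTop n a b)) (matchedTop n a b) := by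
  have hstep1 : theta n a b = theta n a (theta n b (Finset.Icc 1 n)) := by
    rw [theta_full]
    apply theta_congr n (fun _ _ _ => Iff.rfl)
    intro j h1 h2
    simp only [Finset.mem_inter, Finset.mem_Icc]
    constructor
    · intro h; exact ⟨h, h1, h2⟩
    · intro h; exact h.1
  rw [hstep1, core n a b (Finset.Icc 1 n)]
  congr 1
  rw [theta_full]
  apply Finset.inter_eq_left.mpr
  intro x hx
  have h := mtop_mem n a b x hx
  exact Finset.mem_Icc.mpr ⟨h.2.1, h.2.2⟩

/-! ### Tuples -/

lemma thetaTup_cons (n : ℕ) (x : Finset ℕ) {xs : List (Finset ℕ)} (h : xs ≠ []) :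
    thetaTup n (x :: xs) = theta n x (thetaTup n xs) := by
  cases xs with
  | nil => exact absurd rfl h
  | cons y ys => rfl

lemma eStar_one (n : ℕ) (r0 r1 : Finset ℕ) (rest : List (Finset ℕ)) :
    eStar n 1 (r0 :: r1 :: rest) =
      (r0 ∪ (r1 \ matchedTop n r0 r1)) :: matchedTop n r0 r1 :: rest := by
  unfold eStar
  rw [if_pos ⟨le_refl 1, by simp⟩]
  rfl

lemma eStar_cons (n k : ℕ) (r0 : Finset ℕ) (tl : List (Finset ℕ))
    (h : k + 2 < (r0 :: tl).length) :
    eStar n (k + 2) (r0 :: tl) = r0 :: eStar n (k + 1) tl := by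
  unfold eStar
  have h1 : k + 1 < tl.length := by
    simp only [List.length_cons] at h
    omega
  rw [if_pos ⟨by omega, h⟩, if_pos ⟨by omega, h1⟩]
  rfl

lemma eStar_length (n i : ℕ) (rows : List (Finset ℕ)) :
    (eStar n i rows).length = rows.length := by
  unfold eStar
  split
  · simp
  · rfl

lemma main2 (n : ℕ) : ∀ (i : ℕ) (bs : List (Finset ℕ)), 1 ≤ i → i < bs.length →
    thetaTup n bs = thetaTup n (eStar n i bs) := by
  intro i
  induction i with
  | zero => intro bs h1 _; omega
  | succ k IH =>
    intro bs h1 h2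
    match bs, h2 with
    | b0 :: b1 :: rest, h2 =>
      cases k with
      | zero =>
        rw [eStar_one]
        cases rest with
        | nil => exact collapse_two n b0 b1
        | cons c rest' =>
          rw [thetaTup_cons n b0 (show (b1 :: c :: rest') ≠ [] by simp),
            thetaTup_cons n b1 (show (c :: rest') ≠ [] by simp),
            thetaTup_cons n (b0 ∪ (b1 \ matchedTop n b0 b1))
              (show (matchedTop n b0 b1 :: c :: rest') ≠ [] by simp),
            thetaTup_cons n (matchedTop n b0 b1) (show (c :: rest') ≠ [] by simp)]
          exact core n b0 b1 (thetaTup n (c :: rest'))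
      | succ k' =>
        have hlen : k' + 2 < (b0 :: b1 :: rest).length := h2
        have htl : k' + 1 < (b1 :: rest).length := by
          simp only [List.length_cons] at hlen ⊢
          omega
        rw [eStar_cons n k' b0 (b1 :: rest) hlen]
        have hne : eStar n (k' + 1) (b1 :: rest) ≠ [] := by
          intro hnil
          have hl := eStar_length n (k' + 1) (b1 :: rest)
          rw [hnil] at hl
          simp at hl
        rw [thetaTup_cons n b0 (by simp), thetaTup_cons n b0 hne,
          IH (b1 :: rest) (by omega) htl]

/-- For subsets of `{1,…,n}`: `θ(a⊗b⊗c) = θ(e₁^{↓*}(a,b,c))`,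
and more generally `θ(b₁⊗⋯⊗b_L) = θ(e_i^{↓*}(b₁,…,b_L))` for any `1 ≤ i < L`,
where `e_i^{↓*}` replaces the pair `(b_i, b_{i+1})` by `(b_i ∪ u, m)` with `m`, `u`
the matched resp. unmatched elements of `b_{i+1}`. -/
theorem statement8 (n : ℕ) (hn : 1 ≤ n) :
    (∀ a b c : Finset ℕ, a ⊆ Finset.Icc 1 n → b ⊆ Finset.Icc 1 n →
      c ⊆ Finset.Icc 1 n →
      thetaTup n [a, b, c] = thetaTup n (eStar n 1 [a, b, c])) ∧
    (∀ bs : List (Finset ℕ), (∀ B ∈ bs, B ⊆ Finset.Icc 1 n) →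
      ∀ i : ℕ, 1 ≤ i → i < bs.length →
      thetaTup n bs = thetaTup n (eStar n i bs)) := by
  constructor
  · intro a b c _ _ _
    exact main2 n 1 [a, b, c] (le_refl 1) (by simp)
  · intro bs _ i h1 h2
    exact main2 n i bs h1 h2

end MultilineQueue
end

section
/- Let B_1,…,B_r, J be subsets of {1,…,n}. Suppose j ∈ R(B_1,…,B_r,J) and j ∉ θ(B_1⊗⋯⊗B_r⊗J). Then every index i < j with i ∈ θ(B_1⊗⋯⊗B_r) satisfies i ∈ R(B_1,…,B_r,J). -/
open scoped BigOperators

namespace MultilineQueue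

/-! ### Auxiliary development for Statement 9 -/

/-- Prefix count (as an integer). -/
def cnt (X : Finset ℕ) (c : ℕ) : ℤ := ((X.filter (fun x => x ≤ c)).card : ℤ)

/-- The running maximum `max(0, max_{1≤d≤c} (cnt a d - cnt b d))`. -/
def UU (a b : Finset ℕ) : ℕ → ℤ
  | 0 => 0
  | c + 1 => max (UU a b c) (cnt a (c + 1) - cnt b (c + 1))

lemma colsList_succ (n : ℕ) : colsList (n + 1) = colsList n ++ [n + 1] := by
  simp [colsList, List.range_succ]

lemma mem_colsList {c n : ℕ} : c ∈ colsList n ↔ 1 ≤ c ∧ c ≤ n := by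
  simp only [colsList, List.mem_map, List.mem_range]
  constructor
  · rintro ⟨a, ha, rfl⟩; omega
  · rintro ⟨h1, h2⟩; exact ⟨c - 1, by omega, by omega⟩

lemma colsList_pairwise (n : ℕ) : (colsList n).Pairwise (· < ·) :=
  List.Pairwise.map _ (fun a b h => by omega) (List.pairwise_lt_range (n := n))

lemma cnt_zero {X : Finset ℕ} (h : 0 ∉ X) : cnt X 0 = 0 := by
  unfold cnt
  rw [Finset.filter_eq_empty_iff.mpr, Finset.card_empty, Nat.cast_zero]
  intro x hx hle
  exact h ((Nat.le_zero.1 hle) ▸ hx)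

lemma cnt_succ (X : Finset ℕ) (c : ℕ) :
    cnt X (c + 1) = cnt X c + (if c + 1 ∈ X then 1 else 0) := by
  classical
  have hsplit : X.filter (fun x => x ≤ c + 1) =
      X.filter (fun x => x ≤ c) ∪ X.filter (fun x => x = c + 1) := by
    ext x
    simp only [Finset.mem_filter, Finset.mem_union]
    constructor
    · rintro ⟨hx, hle⟩
      rcases Nat.lt_or_ge x (c + 1) with h | h
      · exact Or.inl ⟨hx, by omega⟩
      · exact Or.inr ⟨hx, by omega⟩
    · rintro (⟨hx, h⟩ | ⟨hx, h⟩) <;> exact ⟨hx, by omega⟩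
  have hdisj : Disjoint (X.filter (fun x => x ≤ c)) (X.filter (fun x => x = c + 1)) := by
    rw [Finset.disjoint_left]
    intro x hx hx'
    simp only [Finset.mem_filter] at hx hx'
    omega
  have heq : X.filter (fun x => x = c + 1) = if c + 1 ∈ X then {c + 1} else ∅ :=
    Finset.filter_eq' X (c + 1)
  unfold cnt
  rw [hsplit, Finset.card_union_of_disjoint hdisj, heq]
  split <;> simp

lemma cnt_mono (X : Finset ℕ) {d e : ℕ} (h : d ≤ e) : cnt X d ≤ cnt X e := by
  unfold cnt
  apply Nat.cast_le.2
  apply Finset.card_le_card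
  intro x hx
  simp only [Finset.mem_filter] at hx ⊢
  exact ⟨hx.1, hx.2.trans h⟩

lemma cnt_succ_le (X : Finset ℕ) (c : ℕ) : cnt X (c + 1) ≤ cnt X c + 1 := by
  rw [cnt_succ]; split <;> omega

lemma UU_nonneg (a b : Finset ℕ) (c : ℕ) : 0 ≤ UU a b c := by
  induction c with
  | zero => simp [UU]
  | succ c ih => rw [UU]; exact le_trans ih (le_max_left _ _)

lemma UU_mono (a b : Finset ℕ) {d e : ℕ} (h : d ≤ e) : UU a b d ≤ UU a b e := by
  induction e with
  | zero => simp_all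
  | succ e ih =>
    rcases Nat.lt_or_ge d (e + 1) with h' | h'
    · exact le_trans (ih (by omega)) (by rw [UU]; exact le_max_left _ _)
    · have : d = e + 1 := by omega
      subst this; rfl

lemma UU_ge (a b : Finset ℕ) (ha : 0 ∉ a) (hb : 0 ∉ b) {d c : ℕ} (h : d ≤ c) :
    cnt a d - cnt b d ≤ UU a b c := by
  cases d with
  | zero => rw [cnt_zero ha, cnt_zero hb]; simpa using UU_nonneg a b c
  | succ d =>
    calc cnt a (d + 1) - cnt b (d + 1) ≤ UU a b (d + 1) := by
          rw [UU]; exact le_max_right _ _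
      _ ≤ UU a b c := UU_mono a b h

lemma UU_succ_le (a b : Finset ℕ) (ha : 0 ∉ a) (hb : 0 ∉ b) (c : ℕ) :
    UU a b (c + 1) ≤ UU a b c + 1 := by
  rw [UU]
  rcases max_cases (UU a b c) (cnt a (c + 1) - cnt b (c + 1)) with ⟨h, _⟩ | ⟨h, _⟩
  · omega
  · rw [h]
    have h1 := cnt_succ_le a c
    have h2 := cnt_mono b (show c ≤ c + 1 by omega)
    have h3 : cnt a c - cnt b c ≤ UU a b c := UU_ge a b ha hb (le_refl c)
    omega

lemma UU_exists (a b : Finset ℕ) (c : ℕ) :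
    UU a b c = 0 ∨ ∃ d, 1 ≤ d ∧ d ≤ c ∧ UU a b c = cnt a d - cnt b d := by
  induction c with
  | zero => left; rfl
  | succ c ih =>
    rw [UU]
    rcases max_cases (UU a b c) (cnt a (c + 1) - cnt b (c + 1)) with ⟨h, _⟩ | ⟨h, _⟩
    · rw [h]
      rcases ih with h' | ⟨d, h1, h2, h3⟩
      · left; exact h'
      · right; exact ⟨d, h1, by omega, h3⟩
    · right; exact ⟨c + 1, by omega, le_refl _, h⟩

lemma UU_mem (a b : Finset ℕ) (ha : 0 ∉ a) (hb : 0 ∉ b) (c : ℕ)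
    (h : UU a b (c + 1) ≠ UU a b c) : c + 1 ∈ a := by
  by_contra hc
  apply h
  rw [UU, max_eq_left]
  have h1 : cnt a (c + 1) = cnt a c := by rw [cnt_succ]; simp [hc]
  have h2 := cnt_mono b (show c ≤ c + 1 by omega)
  have h3 : cnt a c - cnt b c ≤ UU a b c := UU_ge a b ha hb (le_refl c)
  omega

lemma mem_take_sorted {l : List ℕ} (hl : l.Pairwise (· < ·)) (c k : ℕ) :
    c ∈ l.take k ↔ c ∈ l ∧ (l.filter (fun x => decide (x < c))).length < k := by
  induction l generalizing k with
  | nil => simp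
  | cons x xs ih =>
    have hx : ∀ y ∈ xs, x < y := fun y hy => List.rel_of_pairwise_cons hl hy
    have hxs : xs.Pairwise (· < ·) := hl.of_cons
    cases k with
    | zero => simp
    | succ k =>
      rw [List.take_succ_cons]
      by_cases hcx : c = x
      · subst hcx
        have hfil : (c :: xs).filter (fun y => decide (y < c)) = [] := by
          rw [List.filter_eq_nil_iff]
          intro y hy
          rcases List.mem_cons.1 hy with rfl | hy'
          · simp
          · have := hx y hy'
            simp only [decide_eq_true_eq]
            omega
        simp [hfil]
      · by_cases hcxs : c ∈ xs
        · have hxc : x < c := hx c hcxs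
          have hfil : (x :: xs).filter (fun y => decide (y < c)) =
              x :: xs.filter (fun y => decide (y < c)) :=
            List.filter_cons_of_pos (by simpa using hxc)
          simp only [List.mem_cons, hcx, false_or, hfil, List.length_cons]
          rw [ih hxs]
          simp only [hcxs, true_and]
          omega
        · have h1 : c ∉ (x :: xs).take (k + 1) := by
            intro hmem
            have := List.mem_of_mem_take hmem
            rcases List.mem_cons.1 this with rfl | h
            · exact hcx rfl
            · exact hcxs h
          rw [List.take_succ_cons] at h1
          simp only [h1, false_iff, not_and, List.mem_cons]
          rintro (rfl | h)
          · exact absurd rfl hcx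
          · exact absurd h hcxs

lemma filter_le_colsList (p : ℕ → Bool) {d n : ℕ} (h : d ≤ n) :
    ((colsList n).filter p).filter (fun x => decide (x ≤ d)) = (colsList d).filter p := by
  induction n with
  | zero =>
    have : d = 0 := by omega
    subst this
    rfl
  | succ n ih =>
    rcases Nat.lt_or_ge d (n + 1) with h' | h'
    · rw [colsList_succ, List.filter_append, List.filter_append, ih (by omega)]
      have hnil : ([n + 1].filter p).filter (fun x => decide (x ≤ d)) = [] := by
        rw [List.filter_filter]
        have : ¬ (n + 1 ≤ d) := by omega
        simp [List.filter_singleton, this]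
      rw [hnil, List.append_nil]
    · have : d = n + 1 := by omega
      subst this
      rw [List.filter_filter]
      apply List.filter_congr
      intro x hx
      have := mem_colsList.1 hx
      simp [this.2]

lemma length_filter_UU (a b : Finset ℕ) (ha : 0 ∉ a) (hb : 0 ∉ b) (d : ℕ) :
    (((colsList d).filter (fun c => decide (UU a b c = UU a b (c - 1) + 1))).length : ℤ) =
      UU a b d := by
  induction d with
  | zero => rfl
  | succ d ih =>
    rw [colsList_succ, List.filter_append, List.length_append]
    have hle := UU_succ_le a b ha hb d
    have hmo := UU_mono a b (show d ≤ d + 1 by omega)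
    have h1d : (d + 1) - 1 = d := rfl
    by_cases hp : UU a b (d + 1) = UU a b d + 1
    · have hdec : decide (UU a b (d + 1) = UU a b (d + 1 - 1) + 1) = true := by
        rw [h1d]; simpa using hp
      rw [List.filter_singleton, hdec]
      simp only [Bool.cond_true]
      simp only [List.length_singleton]
      push_cast
      omega
    · rw [List.filter_singleton]
      simp only [h1d]
      have : decide (UU a b (d + 1) = UU a b d + 1) = false := by
        simpa using hp
      rw [this]
      simp only [Bool.cond_false, List.length_nil]
      have heq : UU a b (d + 1) = UU a b d := by omega
      push_cast
      omega

lemma scan_succ_s9 (n : ℕ) (a b : Finset ℕ) :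
    scan (n + 1) a b =
      (fun (st : List ℕ × Finset ℕ × Finset ℕ × List ℕ) (j : ℕ) =>
        let stk : List ℕ := if j ∈ b then j :: st.1 else st.1
        if j ∈ a then
          match stk with
          | [] => ([], st.2.1, st.2.2.1, st.2.2.2 ++ [j])
          | x :: rest => (rest, insert x st.2.1, insert j st.2.2.1, st.2.2.2)
        else (stk, st.2.1, st.2.2.1, st.2.2.2)) (scan n a b) (n + 1) := by
  rw [scan, scan, colsList_succ, List.foldl_append]
  rfl

lemma scan_spec (a b : Finset ℕ) (ha : 0 ∉ a) (hb : 0 ∉ b) (n : ℕ) :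
    (scan n a b).2.2.2 =
        (colsList n).filter (fun c => decide (UU a b c = UU a b (c - 1) + 1)) ∧
    (∀ c, c ∈ (scan n a b).2.2.1 ↔ c ∈ a ∧ 1 ≤ c ∧ c ≤ n ∧ UU a b c = UU a b (c - 1)) ∧
    (((scan n a b).1.length : ℤ) = cnt b n - cnt a n + UU a b n) := by
  induction n with
  | zero =>
    have h0 : scan 0 a b = ([], ∅, ∅, []) := rfl
    refine ⟨by rw [h0]; rfl, ?_, ?_⟩
    · intro c
      rw [h0]
      constructor
      · intro h; simp at h
      · rintro ⟨_, h1, h2, _⟩; omega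
    · rw [h0]
      simp [UU, cnt_zero ha, cnt_zero hb]
  | succ n ih =>
    obtain ⟨ih1, ih2, ih3⟩ := ih
    have hstklen : (0 : ℤ) ≤ ((scan n a b).1.length : ℤ) := by positivity
    have hUUge : cnt a n - cnt b n ≤ UU a b n := UU_ge a b ha hb (le_refl n)
    have hca := cnt_succ a n
    have hcb := cnt_succ b n
    have hUUdef : UU a b (n + 1) = max (UU a b n) (cnt a (n + 1) - cnt b (n + 1)) := rfl
    have hsub : (n + 1) - 1 = n := rfl
    rw [scan_succ_s9]
    by_cases hma : n + 1 ∈ a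
    · rw [if_pos hma] at hca
      by_cases hmb : n + 1 ∈ b
      · -- opener pushed then immediately popped
        have hUU : UU a b (n + 1) = UU a b n := by
          rw [hUUdef]; rw [if_pos hmb] at hcb
          apply max_eq_left; omega
        simp only [if_pos hmb, if_pos hma]
        refine ⟨?_, ?_, ?_⟩
        · show (scan n a b).2.2.2 = _
          rw [colsList_succ, List.filter_append, ih1]
          have : decide (UU a b (n + 1) = UU a b ((n + 1) - 1) + 1) = false := by
            rw [hsub]
            simp only [decide_eq_false_iff_not]
            omega
          rw [List.filter_singleton, this]
          simp
        · intro c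
          show c ∈ insert (n + 1) (scan n a b).2.2.1 ↔ _
          rw [Finset.mem_insert, ih2 c]
          constructor
          · rintro (rfl | ⟨h1, h2, h3, h4⟩)
            · exact ⟨hma, by omega, by omega, by rw [hsub]; exact hUU⟩
            · exact ⟨h1, h2, by omega, h4⟩
          · rintro ⟨h1, h2, h3, h4⟩
            by_cases hc : c = n + 1
            · exact Or.inl hc
            · exact Or.inr ⟨h1, h2, by omega, h4⟩
        · show (((scan n a b).1.length : ℤ)) = _
          rw [if_pos hmb] at hcb
          omega
      · rw [if_neg hmb] at hcb
        rcases hstk : (scan n a b).1 with _ | ⟨x, rest⟩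
        · -- unmatched closer
          rw [hstk] at ih3
          simp only [List.length_nil, Nat.cast_zero] at ih3
          have hUU : UU a b (n + 1) = UU a b n + 1 := by
            rw [hUUdef]
            have : cnt a (n + 1) - cnt b (n + 1) = UU a b n + 1 := by omega
            rw [this]
            omega
          simp only [if_neg hmb, if_pos hma, hstk]
          refine ⟨?_, ?_, ?_⟩
          · show (scan n a b).2.2.2 ++ [n + 1] = _
            rw [colsList_succ, List.filter_append, ih1]
            have : decide (UU a b (n + 1) = UU a b ((n + 1) - 1) + 1) = true := by
              rw [hsub]; simpa using hUU
            rw [List.filter_singleton, this]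
            simp
          · intro c
            show c ∈ (scan n a b).2.2.1 ↔ _
            rw [ih2 c]
            constructor
            · rintro ⟨h1, h2, h3, h4⟩
              exact ⟨h1, h2, by omega, h4⟩
            · rintro ⟨h1, h2, h3, h4⟩
              by_cases hc : c = n + 1
              · subst hc; rw [hsub] at h4; omega
              · exact ⟨h1, h2, by omega, h4⟩
          · show ((List.length ([] : List ℕ) : ℤ)) = _
            simp only [List.length_nil, Nat.cast_zero]
            omega
        · -- matched closer, pop
          rw [hstk] at ih3
          simp only [List.length_cons] at ih3
          have hUU : UU a b (n + 1) = UU a b n := by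
            rw [hUUdef]
            apply max_eq_left
            push_cast at ih3
            omega
          simp only [if_neg hmb, if_pos hma, hstk]
          refine ⟨?_, ?_, ?_⟩
          · show (scan n a b).2.2.2 = _
            rw [colsList_succ, List.filter_append, ih1]
            have : decide (UU a b (n + 1) = UU a b ((n + 1) - 1) + 1) = false := by
              rw [hsub]
              simp only [decide_eq_false_iff_not]
              omega
            rw [List.filter_singleton, this]
            simp
          · intro c
            show c ∈ insert (n + 1) (scan n a b).2.2.1 ↔ _
            rw [Finset.mem_insert, ih2 c]
            constructor
            · rintro (rfl | ⟨h1, h2, h3, h4⟩)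
              · exact ⟨hma, by omega, by omega, by rw [hsub]; exact hUU⟩
              · exact ⟨h1, h2, by omega, h4⟩
            · rintro ⟨h1, h2, h3, h4⟩
              by_cases hc : c = n + 1
              · exact Or.inl hc
              · exact Or.inr ⟨h1, h2, by omega, h4⟩
          · show ((rest.length : ℤ)) = _
            push_cast at ih3
            omega
    · rw [if_neg hma] at hca
      have hUU : UU a b (n + 1) = UU a b n := by
        rw [hUUdef]
        apply max_eq_left
        have := cnt_mono b (show n ≤ n + 1 by omega)
        omega
      simp only [if_neg hma]
      refine ⟨?_, ?_, ?_⟩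
      · show (scan n a b).2.2.2 = _
        rw [colsList_succ, List.filter_append, ih1]
        have : decide (UU a b (n + 1) = UU a b ((n + 1) - 1) + 1) = false := by
          rw [hsub]
          simp only [decide_eq_false_iff_not]
          omega
        rw [List.filter_singleton, this]
        simp
      · intro c
        show c ∈ (scan n a b).2.2.1 ↔ _
        rw [ih2 c]
        constructor
        · rintro ⟨h1, h2, h3, h4⟩
          exact ⟨h1, h2, by omega, h4⟩
        · rintro ⟨h1, h2, h3, h4⟩
          by_cases hc : c = n + 1
          · subst hc; exact absurd h1 hma
          · exact ⟨h1, h2, by omega, h4⟩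
      · show ((if n + 1 ∈ b then (n + 1) :: (scan n a b).1 else (scan n a b).1).length : ℤ) = _
        by_cases hmb : n + 1 ∈ b
        · rw [if_pos hmb] at hcb ⊢
          simp only [List.length_cons]
          push_cast
          omega
        · rw [if_neg hmb] at hcb ⊢
          omega

lemma mem_theta_iff {n : ℕ} {a b : Finset ℕ} (ha : 0 ∉ a) (hb : 0 ∉ b) {c : ℕ} :
    c ∈ theta n a b ↔ c ∈ a ∧ 1 ≤ c ∧ c ≤ n ∧ UU a b c = UU a b (c - 1) :=
  (scan_spec a b ha hb n).2.1 c

lemma mem_ub_iff {n : ℕ} {a b : Finset ℕ} (ha : 0 ∉ a) (hb : 0 ∉ b) {c : ℕ} :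
    c ∈ (scan n a b).2.2.2 ↔ 1 ≤ c ∧ c ≤ n ∧ UU a b c = UU a b (c - 1) + 1 := by
  rw [(scan_spec a b ha hb n).1, List.mem_filter]
  simp only [decide_eq_true_eq, mem_colsList]
  tauto

lemma UU_two_step (a b : Finset ℕ) (ha : 0 ∉ a) (hb : 0 ∉ b) (c : ℕ) (hc : 1 ≤ c) :
    UU a b c = UU a b (c - 1) ∨ UU a b c = UU a b (c - 1) + 1 := by
  have h1 := UU_mono a b (show c - 1 ≤ c by omega)
  have h2 : UU a b c ≤ UU a b (c - 1) + 1 := by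
    obtain ⟨m, rfl⟩ : ∃ m, c = m + 1 := ⟨c - 1, by omega⟩
    simpa using UU_succ_le a b ha hb m
  omega

lemma UU_eq_delta_of_ne {a b : Finset ℕ} {c : ℕ} (hc : 1 ≤ c)
    (h : UU a b c ≠ UU a b (c - 1)) :
    UU a b c = cnt a c - cnt b c ∧ cnt a c - cnt b c > UU a b (c - 1) := by
  obtain ⟨m, rfl⟩ : ∃ m, c = m + 1 := ⟨c - 1, by omega⟩
  have hdef : UU a b (m + 1) = max (UU a b m) (cnt a (m + 1) - cnt b (m + 1)) := rfl
  have hsub : (m + 1) - 1 = m := rfl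
  rw [hsub] at h ⊢
  rcases max_cases (UU a b m) (cnt a (m + 1) - cnt b (m + 1)) with ⟨h1, h2⟩ | ⟨h1, h2⟩ <;>
    rw [hdef, h1] <;> [skip; constructor] <;> first | rfl | (rw [hdef, h1] at h; omega)

lemma inTheta_facts {n : ℕ} {a b : Finset ℕ} (ha : 0 ∉ a) (hb : 0 ∉ b) {c : ℕ}
    (h : c ∈ theta n a b) :
    c ∈ a ∧ 1 ≤ c ∧ c ≤ n ∧
      ∃ d, d < c ∧ cnt a c - cnt a d ≤ cnt b c - cnt b d := by
  obtain ⟨h1, h2, h3, h4⟩ := (mem_theta_iff ha hb).1 h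
  refine ⟨h1, h2, h3, ?_⟩
  have hdel : cnt a c - cnt b c ≤ UU a b (c - 1) := by
    obtain ⟨m, rfl⟩ : ∃ m, c = m + 1 := ⟨c - 1, by omega⟩
    have hdef : UU a b (m + 1) = max (UU a b m) (cnt a (m + 1) - cnt b (m + 1)) := rfl
    have : (m + 1) - 1 = m := rfl
    rw [this] at h4 ⊢
    rw [hdef] at h4
    rcases max_cases (UU a b m) (cnt a (m + 1) - cnt b (m + 1)) with ⟨h5, h6⟩ | ⟨h5, h6⟩ <;>
      omega
  rcases UU_exists a b (c - 1) with h5 | ⟨d, hd1, hd2, hd3⟩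
  · exact ⟨0, by omega, by rw [cnt_zero ha, cnt_zero hb]; omega⟩
  · exact ⟨d, by omega, by omega⟩

lemma notTheta_facts {n : ℕ} {a b : Finset ℕ} (ha : 0 ∉ a) (hb : 0 ∉ b) {c : ℕ}
    (hc : c ∈ a) (hc1 : 1 ≤ c) (hc2 : c ≤ n) (h : c ∉ theta n a b) :
    ∀ d, d < c → cnt a c - cnt b c > cnt a d - cnt b d := by
  have h4 : UU a b c ≠ UU a b (c - 1) := by
    intro heq
    exact h ((mem_theta_iff ha hb).2 ⟨hc, hc1, hc2, heq⟩)
  obtain ⟨_, hgt⟩ := UU_eq_delta_of_ne hc1 h4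
  intro d hd
  have := UU_ge a b ha hb (show d ≤ c - 1 by omega)
  omega

/-- The cylindric matched set: membership via the take of the unmatched list. -/
lemma mem_Rcyl_iff {n : ℕ} {a b : Finset ℕ} (ha : 0 ∉ a) (hb : 0 ∉ b) {c : ℕ}
    (hc1 : 1 ≤ c) (hc2 : c ≤ n) :
    c ∈ Rcyl n a b ↔ c ∈ theta n a b ∨
      (UU a b c = UU a b (c - 1) + 1 ∧
        UU a b (c - 1) < cnt b n - cnt a n + UU a b n) := by
  obtain ⟨h1, h2, h3⟩ := scan_spec a b ha hb n
  rw [Rcyl, Finset.mem_union, List.mem_toFinset]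
  apply or_congr Iff.rfl
  have hpw : ((scan n a b).2.2.2).Pairwise (· < ·) := by
    rw [h1]
    exact (colsList_pairwise n).filter _
  rw [mem_take_sorted hpw]
  have hfil : ((scan n a b).2.2.2.filter (fun x => decide (x < c))).length = 
      ((colsList (c - 1)).filter
        (fun x => decide (UU a b x = UU a b (x - 1) + 1))).length := by
    rw [h1]
    have : ((colsList n).filter
          (fun x => decide (UU a b x = UU a b (x - 1) + 1))).filter
          (fun x => decide (x < c)) =
        ((colsList n).filter
          (fun x => decide (UU a b x = UU a b (x - 1) + 1))).filter
          (fun x => decide (x ≤ c - 1)) := by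
      apply List.filter_congr
      intro x _
      simp only [decide_eq_decide]
      omega
    rw [this, filter_le_colsList _ (show c - 1 ≤ n by omega)]
  constructor
  · rintro ⟨hmem, hlen⟩
    obtain ⟨_, _, hu⟩ := (mem_ub_iff ha hb).1 hmem
    refine ⟨hu, ?_⟩
    rw [hfil] at hlen
    have hlen' : (((colsList (c - 1)).filter
        (fun x => decide (UU a b x = UU a b (x - 1) + 1))).length : ℤ) <
        ((scan n a b).1.length : ℤ) := by exact_mod_cast hlen
    rw [length_filter_UU a b ha hb] at hlen'
    omega
  · rintro ⟨hu, hlt⟩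
    refine ⟨(mem_ub_iff ha hb).2 ⟨hc1, hc2, hu⟩, ?_⟩
    have : (((scan n a b).2.2.2.filter (fun x => decide (x < c))).length : ℤ) <
        ((scan n a b).1.length : ℤ) := by
      have h5 : (((scan n a b).2.2.2.filter
          (fun x => decide (x < c))).length : ℤ) = UU a b (c - 1) := by
        rw [hfil]; exact length_filter_UU a b ha hb (c - 1)
      rw [h5, h3]
      omega
    exact_mod_cast this

lemma notR_facts {n : ℕ} {a b : Finset ℕ} (ha : 0 ∉ a) (hb : 0 ∉ b) {c : ℕ}
    (hc : c ∈ a) (hc1 : 1 ≤ c) (hc2 : c ≤ n) (h : c ∉ Rcyl n a b) :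
    (∀ d, d < c → cnt a c - cnt b c > cnt a d - cnt b d) ∧
    (∀ d, d ≤ n → cnt a c - cnt b c > cnt a d - cnt b d + (cnt b n - cnt a n)) ∧
    (cnt a c - cnt b c > cnt b n - cnt a n) := by
  rw [mem_Rcyl_iff ha hb hc1 hc2] at h
  push_neg at h
  obtain ⟨hth, himp⟩ := h
  have hfirst := notTheta_facts ha hb hc hc1 hc2 hth
  have h4 : UU a b c ≠ UU a b (c - 1) := by
    intro heq
    exact hth ((mem_theta_iff ha hb).2 ⟨hc, hc1, hc2, heq⟩)
  obtain ⟨heqd, hgt⟩ := UU_eq_delta_of_ne hc1 h4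
  have hstep : UU a b c = UU a b (c - 1) + 1 := by
    rcases UU_two_step a b ha hb c hc1 with h' | h'
    · exact absurd h' h4
    · exact h'
  have hge := himp hstep
  have hnn := UU_nonneg a b n
  refine ⟨hfirst, ?_, ?_⟩
  · intro d hd
    have := UU_ge a b ha hb hd
    omega
  · omega

lemma inR_facts {n : ℕ} {a b : Finset ℕ} (ha : 0 ∉ a) (hb : 0 ∉ b) {c : ℕ}
    (hc1 : 1 ≤ c) (hc2 : c ≤ n) (h : c ∈ Rcyl n a b) :
    (∃ d, d < c ∧ cnt a c - cnt b c ≤ cnt a d - cnt b d) ∨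
    (∃ d, d ≤ n ∧ cnt a c - cnt b c ≤ cnt a d - cnt b d + (cnt b n - cnt a n)) ∨
    (cnt a c - cnt b c ≤ cnt b n - cnt a n) := by
  rw [mem_Rcyl_iff ha hb hc1 hc2] at h
  rcases h with h | ⟨hu, hlt⟩
  · obtain ⟨_, _, _, d, hd1, hd2⟩ := inTheta_facts ha hb h
    exact Or.inl ⟨d, hd1, by omega⟩
  · have hdel : cnt a c - cnt b c = UU a b (c - 1) + 1 := by
      have := UU_eq_delta_of_ne (a := a) (b := b) (c := c) hc1 (by omega)
      omega
    rcases UU_exists a b n with h' | ⟨d, hd1, hd2, hd3⟩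
    · exact Or.inr (Or.inr (by omega))
    · exact Or.inr (Or.inl ⟨d, hd2, by omega⟩)

lemma theta_subset_bot {n : ℕ} {a b : Finset ℕ} (ha : 0 ∉ a) (hb : 0 ∉ b) :
    theta n a b ⊆ a := fun c hc => ((mem_theta_iff ha hb).1 hc).1

lemma Rcyl_subset_bot {n : ℕ} {a b : Finset ℕ} (ha : 0 ∉ a) (hb : 0 ∉ b) :
    Rcyl n a b ⊆ a := by
  intro c hc
  rw [Rcyl, Finset.mem_union, List.mem_toFinset] at hc
  rcases hc with hc | hc
  · exact theta_subset_bot ha hb hc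
  · have hmem := List.mem_of_mem_take hc
    obtain ⟨h1, h2, h3⟩ := (mem_ub_iff ha hb).1 hmem
    obtain ⟨m, rfl⟩ : ∃ m, c = m + 1 := ⟨c - 1, by omega⟩
    exact UU_mem a b ha hb m (by rw [show (m + 1) - 1 = m from rfl] at h3; omega)

lemma theta_mono {n : ℕ} {a b b' : Finset ℕ} (ha : 0 ∉ a) (hb : 0 ∉ b) (hb' : 0 ∉ b')
    (hsub : b ⊆ b') : theta n a b ⊆ theta n a b' := by
  intro c hc
  obtain ⟨h1, h2, h3, d, hd1, hd2⟩ := inTheta_facts ha hb hc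
  rw [mem_theta_iff ha hb']
  refine ⟨h1, h2, h3, ?_⟩
  have hint : cnt b c - cnt b d ≤ cnt b' c - cnt b' d := by
    have heq : ∀ (X : Finset ℕ), cnt X c - cnt X d =
        ((X.filter (fun x => d < x ∧ x ≤ c)).card : ℤ) := by
      intro X
      unfold cnt
      have hsplit : X.filter (fun x => x ≤ c) =
          X.filter (fun x => x ≤ d) ∪ X.filter (fun x => d < x ∧ x ≤ c) := by
        ext x
        simp only [Finset.mem_filter, Finset.mem_union]
        constructor
        · rintro ⟨hx, hle⟩
          rcases Nat.lt_or_ge d x with h' | h'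
          · exact Or.inr ⟨hx, h', hle⟩
          · exact Or.inl ⟨hx, by omega⟩
        · rintro (⟨hx, h'⟩ | ⟨hx, h'⟩) <;> exact ⟨hx, by omega⟩
      have hdisj : Disjoint (X.filter (fun x => x ≤ d))
          (X.filter (fun x => d < x ∧ x ≤ c)) := by
        rw [Finset.disjoint_left]
        intro x hx hx'
        simp only [Finset.mem_filter] at hx hx'
        omega
      rw [hsplit, Finset.card_union_of_disjoint hdisj]
      push_cast
      ring
    rw [heq b, heq b']
    have : (b.filter (fun x => d < x ∧ x ≤ c)) ⊆ (b'.filter (fun x => d < x ∧ x ≤ c)) :=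
      Finset.filter_subset_filter _ hsub
    exact_mod_cast Finset.card_le_card this
  have hdel : cnt a c - cnt b' c ≤ cnt a d - cnt b' d := by omega
  -- now conclude UU a b' c = UU a b' (c - 1)
  have hge : cnt a d - cnt b' d ≤ UU a b' (c - 1) := UU_ge a b' ha hb' (show d ≤ c - 1 by omega)
  obtain ⟨m, rfl⟩ : ∃ m, c = m + 1 := ⟨c - 1, by omega⟩
  have hdef : UU a b' (m + 1) = max (UU a b' m) (cnt a (m + 1) - cnt b' (m + 1)) := rfl
  rw [show (m + 1) - 1 = m from rfl] at hge ⊢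
  rw [hdef]
  apply max_eq_left
  omega

lemma cnt_diff_eq (X : Finset ℕ) {d c : ℕ} (h : d ≤ c) :
    cnt X c - cnt X d = ((X.filter (fun x => d < x ∧ x ≤ c)).card : ℤ) := by
  unfold cnt
  have hsplit : X.filter (fun x => x ≤ c) =
      X.filter (fun x => x ≤ d) ∪ X.filter (fun x => d < x ∧ x ≤ c) := by
    ext x
    simp only [Finset.mem_filter, Finset.mem_union]
    constructor
    · rintro ⟨hx, hle⟩
      rcases Nat.lt_or_ge d x with h' | h'
      · exact Or.inr ⟨hx, h', hle⟩
      · exact Or.inl ⟨hx, by omega⟩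
    · rintro (⟨hx, h'⟩ | ⟨hx, h'⟩) <;> exact ⟨hx, by omega⟩
  have hdisj : Disjoint (X.filter (fun x => x ≤ d))
      (X.filter (fun x => d < x ∧ x ≤ c)) := by
    rw [Finset.disjoint_left]
    intro x hx hx'
    simp only [Finset.mem_filter] at hx hx'
    omega
  rw [hsplit, Finset.card_union_of_disjoint hdisj]
  push_cast
  ring

lemma exists_not_mem (T R : Finset ℕ) {d i : ℕ} (hdi : d ≤ i)
    (h : cnt R i - cnt R d < cnt T i - cnt T d) :
    ∃ t, t ∈ T ∧ t ∉ R ∧ d < t ∧ t ≤ i := by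
  by_contra hcon
  push_neg at hcon
  have hsub : T.filter (fun x => d < x ∧ x ≤ i) ⊆ R.filter (fun x => d < x ∧ x ≤ i) := by
    intro x hx
    simp only [Finset.mem_filter] at hx ⊢
    refine ⟨?_, hx.2⟩
    by_contra hxR
    exact absurd hx.2.2 (by simpa using hcon x hx.1 hxR hx.2.1)
  have := Finset.card_le_card hsub
  rw [cnt_diff_eq T hdi, cnt_diff_eq R hdi] at h
  exact absurd h (by exact_mod_cast not_lt.2 this)

lemma E_const {T'' R : Finset ℕ} (hsub : T'' ⊆ R) {t : ℕ}
    (hcl : ∀ c ∈ R, c ∉ T'' → c ≤ t) {e : ℕ} (hte : t ≤ e) :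
    cnt R e - cnt R t = cnt T'' e - cnt T'' t := by
  rw [cnt_diff_eq R hte, cnt_diff_eq T'' hte]
  congr 2
  ext x
  simp only [Finset.mem_filter]
  constructor
  · rintro ⟨hx, h1, h2⟩
    refine ⟨?_, h1, h2⟩
    by_contra hxT
    exact absurd (hcl x hx hxT) (by omega)
  · rintro ⟨hx, h1, h2⟩
    exact ⟨hsub hx, h1, h2⟩

lemma not_mem_zero_of_Icc {n : ℕ} {B : Finset ℕ} (h : B ⊆ Finset.Icc 1 n) : 0 ∉ B := by
  intro h0
  have := h h0
  simp at this

lemma base_case {n : ℕ} {a J : Finset ℕ} (haI : a ⊆ Finset.Icc 1 n)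
    (hJI : J ⊆ Finset.Icc 1 n)
    {j : ℕ} (hjR : j ∈ Rcyl n a J) (hjT : j ∉ theta n a J)
    {i : ℕ} (hij : i < j) (hia : i ∈ a) : i ∈ Rcyl n a J := by
  have ha : 0 ∉ a := not_mem_zero_of_Icc haI
  have hJ0 : 0 ∉ J := not_mem_zero_of_Icc hJI
  by_contra hiR
  have hjA : j ∈ a := Rcyl_subset_bot ha hJ0 hjR
  have hjb : 1 ≤ j ∧ j ≤ n := by simpa using haI hjA
  have hib : 1 ≤ i ∧ i ≤ n := by simpa using haI hia
  obtain ⟨hN1, hN2, hN3⟩ := notR_facts ha hJ0 hia hib.1 hib.2 hiR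
  have hS1 := notTheta_facts ha hJ0 hjA hjb.1 hjb.2 hjT
  have hSi := hS1 i hij
  rcases inR_facts ha hJ0 hjb.1 hjb.2 hjR with ⟨d, hd, hle⟩ | ⟨d, hd, hle⟩ | hle
  · have := hS1 d hd
    omega
  · have := hN2 d hd
    omega
  · omega

lemma step_case {n : ℕ} {a T T'' R : Finset ℕ} (haI : a ⊆ Finset.Icc 1 n)
    (hTI : T ⊆ Finset.Icc 1 n) (hTI'' : T'' ⊆ Finset.Icc 1 n)
    (hRI : R ⊆ Finset.Icc 1 n)
    (hsub1 : T'' ⊆ T) (hsub2 : T'' ⊆ R)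
    (H2 : ∀ j' ∈ R, j' ∉ T'' → ∀ i' ∈ T, i' < j' → i' ∈ R)
    {j : ℕ} (hjR : j ∈ Rcyl n a R) (hjT : j ∉ theta n a T'')
    {i : ℕ} (hij : i < j) (hiT : i ∈ theta n a T) : i ∈ Rcyl n a R := by
  have ha : 0 ∉ a := not_mem_zero_of_Icc haI
  have hT : 0 ∉ T := not_mem_zero_of_Icc hTI
  have hT'' : 0 ∉ T'' := not_mem_zero_of_Icc hTI''
  have hR : 0 ∉ R := not_mem_zero_of_Icc hRI
  by_contra hiR
  have hjA : j ∈ a := Rcyl_subset_bot ha hR hjR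
  have hjb : 1 ≤ j ∧ j ≤ n := by simpa using haI hjA
  obtain ⟨hiA, hi1, hi2, d1, hd1lt, hd1le⟩ := inTheta_facts ha hT hiT
  obtain ⟨hN1, hN2, hN3⟩ := notR_facts ha hR hiA hi1 hi2 hiR
  have hS1 := notTheta_facts ha hT'' hjA hjb.1 hjb.2 hjT
  have hSi := hS1 i hij
  -- Step 1: find t ∈ T \ R with d1 < t ≤ i
  have h1 : cnt R i - cnt R d1 < cnt T i - cnt T d1 := by
    have := hN1 d1 hd1lt
    omega
  obtain ⟨t, htT, htR, htd, hti⟩ := exists_not_mem T R (le_of_lt hd1lt) h1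
  -- Step 2: all elements of R above t are in T''
  have hcl : ∀ c ∈ R, c ∉ T'' → c ≤ t := by
    intro c hc hc'
    by_contra hgt
    exact htR (H2 c hc hc' t htT (by omega))
  have hEij : cnt R j - cnt R i = cnt T'' j - cnt T'' i := by
    have h1 := E_const hsub2 hcl (show t ≤ j by omega)
    have h2 := E_const hsub2 hcl (show t ≤ i by omega)
    omega
  -- Step 3: case analysis on why j is cylindrically matched
  rcases inR_facts ha hR hjb.1 hjb.2 hjR with ⟨d, hd, hle⟩ | ⟨d, hd, hle⟩ | hle
  · rcases le_or_gt t d with h' | h'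
    · have hEdj : cnt R j - cnt R d = cnt T'' j - cnt T'' d := by
        have h1 := E_const hsub2 hcl (show t ≤ j by omega)
        have h2 := E_const hsub2 hcl h'
        omega
      have := hS1 d hd
      omega
    · have := hN1 d (by omega)
      omega
  · have := hN2 d hd
    omega
  · omega

lemma thetaTup_subset_head {n : ℕ} : ∀ (l : List (Finset ℕ)) (b : Finset ℕ),
    (∀ B ∈ b :: l, B ⊆ Finset.Icc 1 n) → thetaTup n (b :: l) ⊆ b
  | [], b, _ => by rw [thetaTup]
  | c :: r, b, h => by
    rw [thetaTup]
    have hsub := thetaTup_subset_head (n := n) r c (fun B hB => h B (List.mem_cons_of_mem _ hB))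
    have hcI : c ⊆ Finset.Icc 1 n := h c (by simp)
    exact theta_subset_bot (not_mem_zero_of_Icc (h b (by simp)))
      (not_mem_zero_of_Icc (hsub.trans hcI))

lemma thetaTup_subset_Icc {n : ℕ} (l : List (Finset ℕ)) (hl : l ≠ [])
    (h : ∀ B ∈ l, B ⊆ Finset.Icc 1 n) : thetaTup n l ⊆ Finset.Icc 1 n := by
  match l with
  | [] => exact absurd rfl hl
  | b :: r => exact (thetaTup_subset_head r b h).trans (h b (by simp))

lemma Rtup_subset_head {n : ℕ} : ∀ (l : List (Finset ℕ)) (b : Finset ℕ),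
    (∀ B ∈ b :: l, B ⊆ Finset.Icc 1 n) → Rtup n (b :: l) ⊆ b
  | [], b, _ => by rw [Rtup]
  | c :: r, b, h => by
    rw [Rtup]
    have hsub := Rtup_subset_head (n := n) r c (fun B hB => h B (List.mem_cons_of_mem _ hB))
    have hcI : c ⊆ Finset.Icc 1 n := h c (by simp)
    exact Rcyl_subset_bot (not_mem_zero_of_Icc (h b (by simp)))
      (not_mem_zero_of_Icc (hsub.trans hcI))

lemma Rtup_subset_Icc {n : ℕ} (l : List (Finset ℕ)) (hl : l ≠ [])
    (h : ∀ B ∈ l, B ⊆ Finset.Icc 1 n) : Rtup n l ⊆ Finset.Icc 1 n := by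
  match l with
  | [] => exact absurd rfl hl
  | b :: r => exact (Rtup_subset_head r b h).trans (h b (by simp))

lemma theta_subset_Rcyl (n : ℕ) (a b : Finset ℕ) : theta n a b ⊆ Rcyl n a b :=
  Finset.subset_union_left

lemma thetaTup_subset_Rtup {n : ℕ} : ∀ (l : List (Finset ℕ)), l ≠ [] →
    (∀ B ∈ l, B ⊆ Finset.Icc 1 n) → thetaTup n l ⊆ Rtup n l
  | [], hl, _ => absurd rfl hl
  | [b], _, _ => by rw [thetaTup, Rtup]
  | b :: c :: r, _, h => by
    rw [thetaTup, Rtup]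
    have htail : ∀ B ∈ c :: r, B ⊆ Finset.Icc 1 n :=
      fun B hB => h B (List.mem_cons_of_mem _ hB)
    have ih := thetaTup_subset_Rtup (c :: r) (by simp) htail
    have h1 : thetaTup n (c :: r) ⊆ Finset.Icc 1 n := thetaTup_subset_Icc _ (by simp) htail
    have h2 : Rtup n (c :: r) ⊆ Finset.Icc 1 n := Rtup_subset_Icc _ (by simp) htail
    refine (theta_mono (not_mem_zero_of_Icc (h b (by simp)))
      (not_mem_zero_of_Icc h1) (not_mem_zero_of_Icc h2) ih).trans ?_
    exact theta_subset_Rcyl n b (Rtup n (c :: r))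

lemma thetaTup_append_subset {n : ℕ} {J : Finset ℕ} (hJ : J ⊆ Finset.Icc 1 n) :
    ∀ (l : List (Finset ℕ)), l ≠ [] → (∀ B ∈ l, B ⊆ Finset.Icc 1 n) →
    thetaTup n (l ++ [J]) ⊆ thetaTup n l
  | [], hl, _ => absurd rfl hl
  | [b], _, h => by
    show thetaTup n [b, J] ⊆ thetaTup n [b]
    rw [thetaTup, thetaTup, thetaTup]
    exact theta_subset_bot (not_mem_zero_of_Icc (h b (by simp))) (not_mem_zero_of_Icc hJ)
  | b :: c :: r, _, h => by
    show thetaTup n (b :: (c :: r) ++ [J]) ⊆ thetaTup n (b :: c :: r)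
    have htail : ∀ B ∈ c :: r, B ⊆ Finset.Icc 1 n :=
      fun B hB => h B (List.mem_cons_of_mem _ hB)
    have ih := thetaTup_append_subset hJ (c :: r) (by simp) htail
    have htailJ : ∀ B ∈ (c :: r) ++ [J], B ⊆ Finset.Icc 1 n := by
      intro B hB
      rcases List.mem_append.1 hB with hB | hB
      · exact htail B hB
      · simp only [List.mem_singleton] at hB
        subst hB
        exact hJ
    have h1 : thetaTup n ((c :: r) ++ [J]) ⊆ Finset.Icc 1 n :=
      thetaTup_subset_Icc _ (by simp) htailJ
    have h2 : thetaTup n (c :: r) ⊆ Finset.Icc 1 n := thetaTup_subset_Icc _ (by simp) htail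
    have : thetaTup n ((b :: c :: r) ++ [J]) = theta n b (thetaTup n ((c :: r) ++ [J])) := rfl
    rw [this, thetaTup]
    exact theta_mono (not_mem_zero_of_Icc (h b (by simp))) (not_mem_zero_of_Icc h1)
      (not_mem_zero_of_Icc h2) ih

lemma statement9_aux {n : ℕ} {J : Finset ℕ} (hJ : J ⊆ Finset.Icc 1 n) :
    ∀ (Bs : List (Finset ℕ)), Bs ≠ [] → (∀ B ∈ Bs, B ⊆ Finset.Icc 1 n) →
    ∀ j, j ∈ Rtup n (Bs ++ [J]) → j ∉ thetaTup n (Bs ++ [J]) →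
    ∀ i, i < j → i ∈ thetaTup n Bs → i ∈ Rtup n (Bs ++ [J])
  | [], hne, _ => absurd rfl hne
  | [b], _, hBs => by
    intro j hjR hjT i hij hiT
    have hR : Rtup n ([b] ++ [J]) = Rcyl n b J := rfl
    have hT : thetaTup n ([b] ++ [J]) = theta n b J := rfl
    rw [hR] at hjR ⊢
    rw [hT] at hjT
    have hiT' : i ∈ b := hiT
    exact base_case (hBs b (by simp)) hJ hjR hjT hij hiT'
  | b :: c :: r, _, hBs => by
    intro j hjR hjT i hij hiT
    have htail : ∀ B ∈ c :: r, B ⊆ Finset.Icc 1 n :=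
      fun B hB => hBs B (List.mem_cons_of_mem _ hB)
    have htailJ : ∀ B ∈ (c :: r) ++ [J], B ⊆ Finset.Icc 1 n := by
      intro B hB
      rcases List.mem_append.1 hB with hB | hB
      · exact htail B hB
      · simp only [List.mem_singleton] at hB
        subst hB
        exact hJ
    have hRdef : Rtup n ((b :: c :: r) ++ [J]) = Rcyl n b (Rtup n ((c :: r) ++ [J])) := rfl
    have hTdef : thetaTup n ((b :: c :: r) ++ [J]) =
        theta n b (thetaTup n ((c :: r) ++ [J])) := rfl
    rw [hRdef] at hjR ⊢
    rw [hTdef] at hjT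
    have hiT' : i ∈ theta n b (thetaTup n (c :: r)) := hiT
    refine step_case (hBs b (by simp)) (thetaTup_subset_Icc _ (by simp) htail)
      (thetaTup_subset_Icc _ (by simp) htailJ) (Rtup_subset_Icc _ (by simp) htailJ)
      (thetaTup_append_subset hJ (c :: r) (by simp) htail)
      (thetaTup_subset_Rtup ((c :: r) ++ [J]) (by simp) htailJ)
      ?_ hjR hjT hij hiT'
    intro j' hj'R hj'T i' hi'T hlt
    exact statement9_aux hJ (c :: r) (by simp) htail j' hj'R hj'T i' hlt hi'T


/-- Let `B₁,…,B_r, J ⊆ {1,…,n}`.  Suppose `j ∈ R(B₁,…,B_r,J)`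
and `j ∉ θ(B₁⊗⋯⊗B_r⊗J)`.  Then every `i < j` with `i ∈ θ(B₁⊗⋯⊗B_r)` satisfies
`i ∈ R(B₁,…,B_r,J)`. -/
theorem statement9 (n : ℕ) (hn : 1 ≤ n) (Bs : List (Finset ℕ)) (hne : Bs ≠ [])
    (hBs : ∀ B ∈ Bs, B ⊆ Finset.Icc 1 n) (J : Finset ℕ) (hJ : J ⊆ Finset.Icc 1 n)
    (j : ℕ) (hjR : j ∈ Rtup n (Bs ++ [J])) (hjT : j ∉ thetaTup n (Bs ++ [J])) :
    ∀ i : ℕ, i < j → i ∈ thetaTup n Bs → i ∈ Rtup n (Bs ++ [J]) := by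
  intro i hij hiT
  exact statement9_aux hJ Bs hne hBs j hjR hjT i hij hiT

end MultilineQueue
end
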